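/- arXiv:2312.07197 — 7 statements merged into one kernel-verified Lean document; each statement's English description precedes it below -/
import Mathlib

section
/- Let R be an associative ring, S a set of finitely presentable right R-modules, κ a regular cardinal, and C a κ-presentable R-module that is a directed colimit of modules from S. Then C is a direct summand of a directed colimit of modules from S indexed by a directed poset of cardinality less than κ. -/
open CategoryTheory Limits

universe u

/-- A module is finitely presentable if it is the cokernel of a morphism of finitely
generated free modules. -/
def IsFinitelyPresentableMod (A : Type u) [Ring A] (M : Type u) [AddCommGroup M]
    [Module A M] : Prop :=
  ∃ (k l : ℕ) (f : (Fin k →₀ A) →ₗ[A] (Fin l →₀ A)),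
    Nonempty (M ≃ₗ[A] ((Fin l →₀ A) ⧸ LinearMap.range f))

/-- A module is `κ`-presentable if it is the cokernel of a morphism of free modules each
with fewer than `κ` generators. -/
def IsKappaPresentableMod (κ : Cardinal.{u}) (A : Type u) [Ring A] (M : Type u)
    [AddCommGroup M] [Module A M] : Prop :=
  ∃ (ι σ : Type u) (_ : Cardinal.mk ι < κ) (_ : Cardinal.mk σ < κ)
    (f : (ι →₀ A) →ₗ[A] (σ →₀ A)),
    Nonempty (M ≃ₗ[A] ((σ →₀ A) ⧸ LinearMap.range f))

/-- A colimit of a directed diagram with objects in `S`, indexed by a directed poset. -/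
structure DirectedColimitOver (R : Type u) [Ring R] (S : Set (ModuleCat.{u} Rᵐᵒᵖ)) where
  /-- the index poset -/
  Ξ : Type u
  [po : PartialOrder Ξ]
  [dir : IsDirected Ξ (· ≤ ·)]
  [ne : Nonempty Ξ]
  /-- the directed diagram -/
  G : Ξ ⥤ ModuleCat.{u} Rᵐᵒᵖ
  memS : ∀ ξ : Ξ, G.obj ξ ∈ S
  /-- a colimit cocone over the diagram -/
  c : Cocone G
  isColim : IsColimit c

attribute [instance] DirectedColimitOver.po DirectedColimitOver.dir DirectedColimitOver.ne

/-!
Pick, for each of the fewer than `κ` generators of `C`, a preimage at some stage of the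
directed diagram, and for each of the fewer than `κ` relations a stage at which the relation
already holds between the transported preimages. Sending each generator to the class of its
preimage then defines a map from `C` into the colimit of the diagram restricted to any set of
indices containing all these stages, and the canonical map back to `C` is a retraction of it.
Regularity of `κ` lets us close the chosen stages to a directed set of indices of size `< κ`,
by adding pairwise upper bounds countably often.
-/

open Set Cardinal

universe v

theorem Cardinal.IsRegular.exists_directedOn_superset {κ : Cardinal.{u}} (hκ : κ.IsRegular)
    {Ξ : Type u} [Preorder Ξ] [IsDirectedOrder Ξ] [Nonempty Ξ] {T : Set Ξ} (hT : #T < κ) :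
    ∃ Z : Set Ξ, T ⊆ Z ∧ Z.Nonempty ∧ DirectedOn (· ≤ ·) Z ∧ #Z < κ := by
  classical
  rcases hκ.aleph0_le.eq_or_lt with rfl | hκ₀
  · have hT : T.Finite := lt_aleph0_iff_set_finite.1 hT
    obtain ⟨u, hu⟩ := Finset.exists_le hT.toFinset
    have hle : ∀ a ∈ insert u T, a ≤ u := by
      rintro a (rfl | ha)
      exacts [le_rfl, hu a (hT.mem_toFinset.2 ha)]
    exact ⟨insert u T, subset_insert _ _, insert_nonempty _ _,
      fun a ha b hb => ⟨u, mem_insert _ _, hle a ha, hle b hb⟩, (hT.insert u).lt_aleph0⟩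
  · choose ub hub using (directed_of (· ≤ ·) : ∀ a b : Ξ, ∃ c, a ≤ c ∧ b ≤ c)
    let Tn : ℕ → Set Ξ := fun n =>
      (fun s => s ∪ image2 ub s s)^[n] (insert (Classical.arbitrary Ξ) T)
    have hTn_mono : Monotone Tn := monotone_nat_of_le_succ fun n => by
      simp only [Tn, Function.iterate_succ_apply']
      exact subset_union_left
    have hTn_card : ∀ n, #(Tn n) < κ := by
      intro n
      induction n with
      | zero =>
        exact mk_insert_le.trans_lt (add_lt_of_lt hκ.aleph0_le hT (one_lt_aleph0.trans hκ₀))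
      | succ n ih =>
        simp only [Tn, Function.iterate_succ_apply']
        exact (mk_union_le _ _).trans_lt (add_lt_of_lt hκ.aleph0_le ih
          (mk_image2_le.trans_lt (mul_lt_of_lt hκ.aleph0_le ih ih)))
    refine ⟨⋃ n, Tn n, fun t ht => mem_iUnion.2 ⟨0, subset_insert _ _ ht⟩,
      ⟨_, mem_iUnion.2 ⟨0, mem_insert _ _⟩⟩, ?_, ?_⟩
    · intro a ha b hb
      obtain ⟨m, hm⟩ := mem_iUnion.1 ha
      obtain ⟨n, hn⟩ := mem_iUnion.1 hb
      refine ⟨ub a b, mem_iUnion.2 ⟨max m n + 1, ?_⟩, hub a b⟩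
      simp only [Tn, Function.iterate_succ_apply']
      exact subset_union_right (mem_image2_of_mem (hTn_mono (le_max_left m n) hm)
        (hTn_mono (le_max_right m n) hn))
    · have h := (mk_iUnion_le_sum_mk_lift (f := Tn)).trans_lt
        (sum_lt_lift_of_isRegular hκ (by simpa using hκ₀) hTn_card)
      rwa [lift_uzero] at h

abbrev CategoryTheory.Functor.restrictToSet {Ξ : Type*} [Preorder Ξ]
    {𝒞 : Type*} [Category 𝒞] (G : Ξ ⥤ 𝒞) (Z : Set Ξ) : Z ⥤ 𝒞 :=
  (Subtype.mono_coe (· ∈ Z)).functor ⋙ G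

namespace ModuleCat

section Combination

variable {A : Type*} [Ring A] {J : Type*} [Preorder J] (H : J ⥤ ModuleCat.{v} A)
  {σ : Type*} {ξ : σ → J} (c : ∀ s, H.obj (ξ s))

/-- Only meaningful on `w` whose support lies below `j`: generators `s` with `ξ s ≰ j` are
sent to `0`. -/
noncomputable def combinationAt (j : J) : (σ →₀ A) →ₗ[A] H.obj j :=
  open Classical in
  Finsupp.linearCombination A fun s => if h : ξ s ≤ j then H.map (homOfLE h) (c s) else 0

variable {H c}

lemma combinationAt_apply {j : J} {w : σ →₀ A} (hw : ∀ s ∈ w.support, ξ s ≤ j) :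
    combinationAt H c j w =
      ∑ s ∈ w.support.attach, w s • H.map (homOfLE (hw s s.2)) (c s) := by
  rw [combinationAt, Finsupp.linearCombination_apply, Finsupp.sum, ← Finset.sum_attach]
  exact Finset.sum_congr rfl fun s _ => by rw [dif_pos (hw s s.2)]

lemma map_combinationAt {j k : J} (hjk : j ≤ k) {w : σ →₀ A}
    (hw : ∀ s ∈ w.support, ξ s ≤ j) :
    H.map (homOfLE hjk) (combinationAt H c j w) = combinationAt H c k w := by
  rw [combinationAt_apply hw, combinationAt_apply fun s hs => (hw s hs).trans hjk, map_sum]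
  refine Finset.sum_congr rfl fun s _ => ?_
  rw [map_smul, ← ConcreteCategory.comp_apply, ← H.map_comp]
  rfl

lemma ι_combinationAt (D : Cocone H) {j : J} {w : σ →₀ A}
    (hw : ∀ s ∈ w.support, ξ s ≤ j) :
    D.ι.app j (combinationAt H c j w) =
      Finsupp.linearCombination A (fun s => D.ι.app (ξ s) (c s)) w := by
  rw [combinationAt_apply hw, map_sum, Finsupp.linearCombination_apply, Finsupp.sum]
  conv_rhs => rw [← Finset.sum_attach]
  refine Finset.sum_congr rfl fun s _ => ?_
  rw [map_smul, ← ConcreteCategory.comp_apply, D.w]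

end Combination

variable {A : Type u} [Ring A] {σ : Type u}
  {Ξ : Type u} [Preorder Ξ] [IsDirectedOrder Ξ] [Nonempty Ξ] {G : Ξ ⥤ ModuleCat.{u} A}
  {E : Cocone G}

lemma exists_combinationAt_eq_zero (hE : IsColimit E) {ξ : σ → Ξ} (c : ∀ s, G.obj (ξ s))
    {w : σ →₀ A}
    (hw : Finsupp.linearCombination A (fun s => E.ι.app (ξ s) (c s)) w = (0 : E.pt)) :
    ∃ k, (∀ s ∈ w.support, ξ s ≤ k) ∧ combinationAt G c k w = 0 := by
  classical
  obtain ⟨j, hj⟩ := Finset.exists_le (w.support.image ξ)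
  have hξj : ∀ s ∈ w.support, ξ s ≤ j := fun s hs => hj _ (Finset.mem_image_of_mem ξ hs)
  have h0 : E.ι.app j (combinationAt G c j w) = E.ι.app j 0 := by
    rw [ι_combinationAt E hξj, hw, map_zero]
  obtain ⟨k, f, g, hfg⟩ := Concrete.isColimit_exists_of_rep_eq G hE _ _ h0
  refine ⟨k, fun s hs => (hξj s hs).trans (leOfHom f), ?_⟩
  rw [← map_combinationAt (leOfHom f) hξj, ← map_zero (G.map g).hom, ← hfg]
  rfl

theorem exists_lift_to_restrictToSet_of_comp_eq_zero (hE : IsColimit E) {ι : Type u}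
    (f : (ι →₀ A) →ₗ[A] (σ →₀ A)) (p : (σ →₀ A) →ₗ[A] E.pt)
    (hp : p ∘ₗ f = 0) :
    ∃ T : Set Ξ, #T ≤ #σ + #ι ∧ ∀ Z : Set Ξ, T ⊆ Z →
      ∃ φ : (σ →₀ A) →ₗ[A] (colimit (G.restrictToSet Z) : ModuleCat A),
        φ ∘ₗ f = 0 ∧ (colimit.desc _ (E.whisker _)).hom ∘ₗ φ = p := by
  choose ξ c hc using fun s => Concrete.isColimit_exists_rep G hE (p (Finsupp.single s 1))
  have hpξ : Finsupp.linearCombination A (fun s => (E.ι.app (ξ s) (c s) : E.pt)) = p := by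
    ext s
    simp [hc]
  choose ν hν hν0 using fun r => exists_combinationAt_eq_zero hE c
    (w := f (Finsupp.single r 1)) (by rw [hpξ, ← LinearMap.comp_apply, hp, LinearMap.zero_apply])
  refine ⟨range ξ ∪ range ν, (mk_union_le _ _).trans (add_le_add mk_range_le mk_range_le),
    fun Z hZ => ?_⟩
  let ξZ (s : σ) : Z := ⟨ξ s, hZ (Or.inl ⟨s, rfl⟩)⟩
  let νZ (r : ι) : Z := ⟨ν r, hZ (Or.inr ⟨r, rfl⟩)⟩
  refine ⟨Finsupp.linearCombination A fun s => colimit.ι (G.restrictToSet Z) (ξZ s) (c s),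
    ?_, ?_⟩
  · ext r
    refine (ι_combinationAt (colimit.cocone (G.restrictToSet Z)) (ξ := ξZ) (c := c)
      (j := νZ r) (hν r)).symm.trans ?_
    exact (congrArg (colimit.ι (G.restrictToSet Z) (νZ r)).hom (hν0 r)).trans (map_zero _)
  · ext s
    simp only [LinearMap.comp_apply, Finsupp.lsingle_apply, Finsupp.linearCombination_single,
      one_smul]
    exact (ConcreteCategory.congr_hom
      (colimit.ι_desc (E.whisker (Subtype.mono_coe (· ∈ Z)).functor) (ξZ s)) (c s)).trans
      (hc s)

end ModuleCat

theorem IsKappaPresentableMod.exists_lift_to_restrictToSet {A : Type u} [Ring A]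
    {Ξ : Type u} [Preorder Ξ] [IsDirectedOrder Ξ] [Nonempty Ξ] {G : Ξ ⥤ ModuleCat.{u} A}
    {E : Cocone G} (hE : IsColimit E) {κ : Cardinal.{u}} (hκ : ℵ₀ ≤ κ)
    {M : ModuleCat.{u} A} (hM : IsKappaPresentableMod κ A M) (g : M ⟶ E.pt) :
    ∃ T : Set Ξ, #T < κ ∧ ∀ Z : Set Ξ, T ⊆ Z →
      ∃ i : M ⟶ colimit (G.restrictToSet Z),
        i ≫ colimit.desc _ (E.whisker (Subtype.mono_coe (· ∈ Z)).functor) = g := by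
  obtain ⟨ι, σ, hι, hσ, f, ⟨e⟩⟩ := hM
  let p := g.hom ∘ₗ e.symm.toLinearMap ∘ₗ (LinearMap.range f).mkQ
  have hp : p ∘ₗ f = 0 := by
    simp only [p, LinearMap.comp_assoc, LinearMap.range_mkQ_comp, LinearMap.comp_zero]
  obtain ⟨T, hT, hlift⟩ := ModuleCat.exists_lift_to_restrictToSet_of_comp_eq_zero hE f p hp
  refine ⟨T, hT.trans_lt (add_lt_of_lt hκ hσ hι), fun Z hZ => ?_⟩
  obtain ⟨φ, hφf, hφp⟩ := hlift Z hZ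
  have hker := LinearMap.range_le_ker_iff.2 hφf
  refine ⟨ModuleCat.ofHom ((LinearMap.range f).liftQ φ hker ∘ₗ e.toLinearMap), ?_⟩
  ext x
  obtain ⟨q, hq⟩ := (LinearMap.range f).mkQ_surjective (e x)
  have h := LinearMap.congr_fun hφp q
  simp only [LinearMap.comp_apply, p] at h
  change (colimit.desc (G.restrictToSet Z) (E.whisker (Subtype.mono_coe (· ∈ Z)).functor)).hom
    ((LinearMap.range f).liftQ φ hker (e x)) = g.hom x
  rw [← hq, Submodule.mkQ_apply, Submodule.liftQ_apply, h, hq, LinearEquiv.coe_coe,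
    e.symm_apply_apply]

noncomputable def DirectedColimitOver.restrict {R : Type u} [Ring R]
    {S : Set (ModuleCat.{u} Rᵐᵒᵖ)} (P : DirectedColimitOver R S) (Z : Set P.Ξ)
    (hZ : DirectedOn (· ≤ ·) Z) (hZne : Z.Nonempty) : DirectedColimitOver R S where
  Ξ := Z
  dir := hZ.isDirectedOrder
  ne := hZne.to_subtype
  G := P.G.restrictToSet Z
  memS ξ := P.memS ξ
  c := colimit.cocone _
  isColim := colimit.isColimit _

theorem direct_summand_of_small_directed_colimit_general
    (R : Type u) [Ring R] (S : Set (ModuleCat.{u} Rᵐᵒᵖ))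
    (κ : Cardinal.{u}) (hκ : κ.IsRegular)
    (C : ModuleCat.{u} Rᵐᵒᵖ) (hC : IsKappaPresentableMod κ Rᵐᵒᵖ C)
    (P : DirectedColimitOver R S) (hPC : Nonempty (P.c.pt ≅ C)) :
    ∃ (Q : DirectedColimitOver R S) (_ : Cardinal.mk Q.Ξ < κ)
      (i : C ⟶ Q.c.pt) (r : Q.c.pt ⟶ C), i ≫ r = 𝟙 C := by
  obtain ⟨e⟩ := hPC
  obtain ⟨T, hT, hlift⟩ := hC.exists_lift_to_restrictToSet P.isColim hκ.aleph0_le e.inv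
  obtain ⟨Z, hTZ, hZne, hZdir, hZ⟩ := hκ.exists_directedOn_superset hT
  obtain ⟨i, hi⟩ := hlift Z hTZ
  have hir : i ≫ colimit.desc _ (P.c.whisker (Subtype.mono_coe (· ∈ Z)).functor) ≫ e.hom =
      𝟙 C := by
    rw [← Category.assoc, hi, e.inv_hom_id]
  exact ⟨P.restrict Z hZdir hZne, hZ, i, _, hir⟩

/-- **κ-presentable directed colimits are summands of small directed colimits.**
Let `R` be an associative ring, `S` a set of finitely presentable right `R`-modules,
`κ` a regular cardinal, and `C` a `κ`-presentable right `R`-module which is a directed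
colimit of modules from `S`.  Then `C` is a direct summand of a directed colimit of
modules from `S` indexed by a directed poset of cardinality less than `κ`. -/
theorem direct_summand_of_small_directed_colimit
    (R : Type u) [Ring R] (S : Set (ModuleCat.{u} Rᵐᵒᵖ))
    (hS : ∀ T ∈ S, IsFinitelyPresentableMod Rᵐᵒᵖ T)
    (κ : Cardinal.{u}) (hκ : κ.IsRegular)
    (C : ModuleCat.{u} Rᵐᵒᵖ) (hC : IsKappaPresentableMod κ Rᵐᵒᵖ C)
    (P : DirectedColimitOver R S) (hPC : Nonempty (P.c.pt ≅ C)) :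
    ∃ (Q : DirectedColimitOver R S) (_ : Cardinal.mk Q.Ξ < κ)
      (i : C ⟶ Q.c.pt) (r : Q.c.pt ⟶ C), i ≫ r = 𝟙 C :=
  direct_summand_of_small_directed_colimit_general R S κ hκ C hC P hPC
end

section
/- Let R be a ring, M a pure submodule of a left R-module L, and F^• a complex of right R-modules such that the complex of abelian groups F^• ⊗_R L is acyclic. Then the complex F^• ⊗_R M is acyclic. -/
open CategoryTheory TensorProduct

universe u

set_option maxHeartbeats 1000000
noncomputable section

namespace NCT

variable (R : Type u) [Ring R]

/-- The subgroup of relations defining the balanced tensor product `M ⊗_R N`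
of a right `R`-module `M` and a left `R`-module `N`. -/
def rel (M N : Type u) [AddCommGroup M] [Module Rᵐᵒᵖ M] [AddCommGroup N] [Module R N] :
    AddSubgroup (M ⊗[ℤ] N) :=
  AddSubgroup.closure {x | ∃ (r : R) (m : M) (n : N),
    x = (MulOpposite.op r • m) ⊗ₜ[ℤ] n - m ⊗ₜ[ℤ] (r • n)}

/-- The balanced tensor product `M ⊗_R N` over a (possibly noncommutative) ring `R`. -/
def Tens (M N : Type u) [AddCommGroup M] [Module Rᵐᵒᵖ M] [AddCommGroup N] [Module R N] :
    Type u :=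
  (M ⊗[ℤ] N) ⧸ rel R M N

instance (M N : Type u) [AddCommGroup M] [Module Rᵐᵒᵖ M] [AddCommGroup N] [Module R N] :
    AddCommGroup (Tens R M N) :=
  inferInstanceAs (AddCommGroup ((M ⊗[ℤ] N) ⧸ rel R M N))

variable {R}

variable {M M' M'' N N' N'' : Type u}
  [AddCommGroup M] [Module Rᵐᵒᵖ M] [AddCommGroup M'] [Module Rᵐᵒᵖ M']
  [AddCommGroup M''] [Module Rᵐᵒᵖ M'']
  [AddCommGroup N] [Module R N] [AddCommGroup N'] [Module R N']
  [AddCommGroup N''] [Module R N'']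

/-- The canonical projection. -/
def mk : M ⊗[ℤ] N →+ Tens R M N := QuotientAddGroup.mk' (rel R M N)

lemma mk_surjective : Function.Surjective (mk (R := R) (M := M) (N := N)) :=
  QuotientAddGroup.mk'_surjective _

private def intMap (f : M →ₗ[Rᵐᵒᵖ] M') (g : N →ₗ[R] N') : M ⊗[ℤ] N →ₗ[ℤ] M' ⊗[ℤ] N' :=
  TensorProduct.map f.toAddMonoidHom.toIntLinearMap g.toAddMonoidHom.toIntLinearMap

private lemma intMap_id :
    intMap (LinearMap.id : M →ₗ[Rᵐᵒᵖ] M) (LinearMap.id : N →ₗ[R] N) = LinearMap.id :=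
  TensorProduct.ext' fun _ _ => rfl

private lemma intMap_comp (f' : M' →ₗ[Rᵐᵒᵖ] M'') (f : M →ₗ[Rᵐᵒᵖ] M')
    (g' : N' →ₗ[R] N'') (g : N →ₗ[R] N') :
    intMap (f'.comp f) (g'.comp g) = (intMap f' g').comp (intMap f g) :=
  TensorProduct.ext' fun _ _ => rfl

private lemma rel_le (f : M →ₗ[Rᵐᵒᵖ] M') (g : N →ₗ[R] N') :
    rel R M N ≤ (rel R M' N').comap (intMap f g).toAddMonoidHom := by
  rw [rel, AddSubgroup.closure_le]
  rintro x ⟨r, m, n, rfl⟩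
  simp only [SetLike.mem_coe, AddSubgroup.mem_comap, LinearMap.toAddMonoidHom_coe, map_sub]
  apply AddSubgroup.subset_closure
  refine ⟨r, f m, g n, ?_⟩
  show f (MulOpposite.op r • m) ⊗ₜ[ℤ] g n - f m ⊗ₜ[ℤ] g (r • n) = _
  simp [intMap, f.map_smul, g.map_smul]

/-- Functoriality of the balanced tensor product. -/
def tmap (f : M →ₗ[Rᵐᵒᵖ] M') (g : N →ₗ[R] N') : Tens R M N →+ Tens R M' N' :=
  QuotientAddGroup.map _ _ (intMap f g).toAddMonoidHom (rel_le f g)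

lemma tmap_mk (f : M →ₗ[Rᵐᵒᵖ] M') (g : N →ₗ[R] N') (x : M ⊗[ℤ] N) :
    tmap f g (mk x) = mk (intMap f g x) := rfl

lemma tmap_id_apply (x : Tens R M N) :
    tmap (LinearMap.id : M →ₗ[Rᵐᵒᵖ] M) (LinearMap.id : N →ₗ[R] N) x = x := by
  obtain ⟨y, rfl⟩ := mk_surjective x
  rw [tmap_mk, intMap_id]
  rfl

lemma tmap_tmap (f' : M' →ₗ[Rᵐᵒᵖ] M'') (f : M →ₗ[Rᵐᵒᵖ] M')
    (g' : N' →ₗ[R] N'') (g : N →ₗ[R] N') (x : Tens R M N) :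
    tmap f' g' (tmap f g x) = tmap (f'.comp f) (g'.comp g) x := by
  obtain ⟨y, rfl⟩ := mk_surjective x
  rw [tmap_mk, tmap_mk, tmap_mk, intMap_comp]
  rfl

lemma tmap_add_left (f₁ f₂ : M →ₗ[Rᵐᵒᵖ] M') (g : N →ₗ[R] N') :
    tmap (f₁ + f₂) g = tmap f₁ g + tmap f₂ g := by
  ext x
  obtain ⟨y, rfl⟩ := mk_surjective x
  have h : intMap (f₁ + f₂) g = intMap f₁ g + intMap f₂ g := by
    apply TensorProduct.ext'
    intro m n
    show (f₁ + f₂) m ⊗ₜ[ℤ] g n = f₁ m ⊗ₜ[ℤ] g n + f₂ m ⊗ₜ[ℤ] g n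
    simp [intMap, add_tmul]
  simp only [AddMonoidHom.add_apply, tmap_mk, h, LinearMap.add_apply]
  rw [map_add]

lemma tmap_add_right (f : M →ₗ[Rᵐᵒᵖ] M') (g₁ g₂ : N →ₗ[R] N') :
    tmap f (g₁ + g₂) = tmap f g₁ + tmap f g₂ := by
  ext x
  obtain ⟨y, rfl⟩ := mk_surjective x
  have h : intMap f (g₁ + g₂) = intMap f g₁ + intMap f g₂ := by
    apply TensorProduct.ext'
    intro m n
    show f m ⊗ₜ[ℤ] (g₁ + g₂) n = f m ⊗ₜ[ℤ] g₁ n + f m ⊗ₜ[ℤ] g₂ n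
    simp [intMap, tmul_add]
  simp only [AddMonoidHom.add_apply, tmap_mk, h, LinearMap.add_apply]
  rw [map_add]


lemma tmap_zero_left (g : N →ₗ[R] N') :
    tmap (0 : M →ₗ[Rᵐᵒᵖ] M') g = 0 := by
  ext x
  obtain ⟨y, rfl⟩ := mk_surjective x
  have h : intMap (0 : M →ₗ[Rᵐᵒᵖ] M') g = 0 := by
    apply TensorProduct.ext'
    intro m n
    show (0 : M →ₗ[Rᵐᵒᵖ] M') m ⊗ₜ[ℤ] g n = 0
    simp [intMap]
  rw [tmap_mk, h]
  rfl

lemma tmap_zero_right (f : M →ₗ[Rᵐᵒᵖ] M') :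
    tmap f (0 : N →ₗ[R] N') = 0 := by
  ext x
  obtain ⟨y, rfl⟩ := mk_surjective x
  have h : intMap f (0 : N →ₗ[R] N') = 0 := by
    apply TensorProduct.ext'
    intro m n
    show f m ⊗ₜ[ℤ] (0 : N →ₗ[R] N') n = 0
    simp [intMap]
  rw [tmap_mk, h]
  rfl

variable (R)

/-- The balanced tensor product, as a bifunctor on module categories. -/
def tensorBifunctor : ModuleCat.{u} Rᵐᵒᵖ ⥤ ModuleCat.{u} R ⥤ AddCommGrpCat.{u} where
  obj M :=
    { obj := fun N => AddCommGrpCat.of (Tens R M N)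
      map := fun g => AddCommGrpCat.ofHom (tmap LinearMap.id g.hom)
      map_id := fun N => by
        ext x
        exact tmap_id_apply x
      map_comp := fun g g' => by
        ext x
        show tmap LinearMap.id (LinearMap.comp g'.hom g.hom) x
          = tmap LinearMap.id g'.hom (tmap LinearMap.id g.hom x)
        rw [tmap_tmap, LinearMap.id_comp] }
  map f :=
    { app := fun N => AddCommGrpCat.ofHom (tmap f.hom LinearMap.id)
      naturality := fun N N' g => by
        ext x
        show tmap f.hom LinearMap.id (tmap LinearMap.id g.hom x)
          = tmap LinearMap.id g.hom (tmap f.hom LinearMap.id x)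
        rw [tmap_tmap, tmap_tmap, LinearMap.id_comp, LinearMap.comp_id,
          LinearMap.id_comp, LinearMap.comp_id] }
  map_id := fun M => by
    ext N x
    exact tmap_id_apply x
  map_comp := fun f f' => by
    ext N x
    show tmap (LinearMap.comp f'.hom f.hom) LinearMap.id x
      = tmap f'.hom LinearMap.id (tmap f.hom LinearMap.id x)
    rw [tmap_tmap, LinearMap.id_comp]

instance (M : ModuleCat.{u} Rᵐᵒᵖ) : ((tensorBifunctor R).obj M).Additive where
  map_add := by
    intro N N' g g'
    ext x
    show tmap LinearMap.id (g + g').hom x = _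
    rw [ModuleCat.hom_add, tmap_add_right]
    rfl

instance (N : ModuleCat.{u} R) : ((tensorBifunctor R).flip.obj N).Additive where
  map_add := by
    intro M M' f f'
    ext x
    show tmap (f + f').hom LinearMap.id x = _
    rw [ModuleCat.hom_add, tmap_add_left]
    rfl


instance : (tensorBifunctor R).PreservesZeroMorphisms where
  map_zero := by
    intro M M'
    ext N x
    show tmap (0 : M ⟶ M').hom LinearMap.id x = 0
    rw [ModuleCat.hom_zero, tmap_zero_left]
    rfl

/-- A right `R`-module `M` is flat if `M ⊗_R -` preserves injectivity. -/
def FlatRight (M : Type u) [AddCommGroup M] [Module Rᵐᵒᵖ M] : Prop :=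
  ∀ (N N' : Type u) [AddCommGroup N] [Module R N] [AddCommGroup N'] [Module R N']
    (g : N →ₗ[R] N'), Function.Injective g →
      Function.Injective (tmap (LinearMap.id : M →ₗ[Rᵐᵒᵖ] M) g)

/-- A left `R`-module `N` is flat if `- ⊗_R N` preserves injectivity. -/
def FlatLeft (N : Type u) [AddCommGroup N] [Module R N] : Prop :=
  ∀ (M M' : Type u) [AddCommGroup M] [Module Rᵐᵒᵖ M] [AddCommGroup M'] [Module Rᵐᵒᵖ M']
    (f : M →ₗ[Rᵐᵒᵖ] M'), Function.Injective f →
      Function.Injective (tmap f (LinearMap.id : N →ₗ[R] N))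

end NCT

open CategoryTheory Limits

/-- The complex of abelian groups `F^• ⊗_R N` obtained by tensoring a complex of right
`R`-modules termwise with a left `R`-module `N`. -/
noncomputable def tensCplx {R : Type u} [Ring R]
    (Fc : CochainComplex (ModuleCat.{u} Rᵐᵒᵖ) ℤ) (N : ModuleCat.{u} R) :
    CochainComplex AddCommGrpCat.{u} ℤ :=
  (((NCT.tensorBifunctor R).flip.obj N).mapHomologicalComplex (ComplexShape.up ℤ)).obj Fc

/-!
A character `φ` of `A ⊗_R M` that kills the boundaries `d(A₀ ⊗_R M)` is the same as an
`R`-linear map `A → M⋆` killing `d(A₀)`, where `M⋆ = Hom_ℤ(M, ℚ/ℤ)`. Purity makes the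
restriction `L⋆ → M⋆` split, so composing with the splitting extends `φ` to a character of
`A ⊗_R L` that still kills the boundaries. Hence a cycle of `F^• ⊗_R M` whose image in
`F^• ⊗_R L` is a boundary is killed by every character that kills boundaries, i.e. it is a
boundary itself.
-/

lemma CharacterModule.exists_eq_zero_on_apply_ne_zero_of_notMem {A : Type*} [AddCommGroup A]
    {B : AddSubgroup A} {a : A} (ha : a ∉ B) :
    ∃ c : A →+ AddCircle (1 : ℚ), (∀ b ∈ B, c b = 0) ∧ c a ≠ 0 := by
  obtain ⟨c, hc⟩ := exists_character_apply_ne_zero_of_ne_zero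
    (a := QuotientAddGroup.mk' B a)
    (by rwa [QuotientAddGroup.mk'_apply, ne_eq, QuotientAddGroup.eq_zero_iff])
  refine ⟨c.comp (QuotientAddGroup.mk' B), fun b hb => ?_, hc⟩
  show c (b : A ⧸ B) = 0
  rw [(QuotientAddGroup.eq_zero_iff b).2 hb, map_zero]

namespace NCT

variable {R : Type u} [Ring R] {X X' Y Y' : Type u} {G : Type*}
  [AddCommGroup X] [Module Rᵐᵒᵖ X] [AddCommGroup X'] [Module Rᵐᵒᵖ X']
  [AddCommGroup Y] [Module R Y] [AddCommGroup Y'] [Module R Y'] [AddCommGroup G]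

lemma mk_op_smul_tmul (r : R) (x : X) (y : Y) :
    mk (R := R) ((MulOpposite.op r • x) ⊗ₜ[ℤ] y) = mk (x ⊗ₜ[ℤ] (r • y)) := by
  rw [← sub_eq_zero, ← map_sub]
  exact (QuotientAddGroup.eq_zero_iff _).2 (AddSubgroup.subset_closure ⟨r, x, y, rfl⟩)

lemma tmap_id_tmap_id_comm (f : X →ₗ[Rᵐᵒᵖ] X') (g : Y →ₗ[R] Y') (z : Tens R X Y) :
    tmap f LinearMap.id (tmap LinearMap.id g z) = tmap LinearMap.id g (tmap f LinearMap.id z) := by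
  rw [tmap_tmap, tmap_tmap, LinearMap.id_comp, LinearMap.comp_id, LinearMap.id_comp,
    LinearMap.comp_id]

@[ext]
lemma addHom_ext {φ ψ : Tens R X Y →+ G}
    (h : ∀ x y, φ (mk (x ⊗ₜ[ℤ] y)) = ψ (mk (x ⊗ₜ[ℤ] y))) : φ = ψ := by
  refine QuotientAddGroup.addMonoidHom_ext _ ?_
  ext w
  induction w using TensorProduct.induction_on with
  | zero => simp only [map_zero]
  | tmul x y => exact h x y
  | add w w' hw hw' => simp only [map_add, hw, hw']

def lift (b : X →+ Y →+ G) (hb : ∀ (r : R) x y, b (MulOpposite.op r • x) y = b x (r • y)) :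
    Tens R X Y →+ G :=
  QuotientAddGroup.lift (rel R X Y)
    (TensorProduct.liftAddHom b fun n x y => by rw [map_zsmul, map_zsmul]; rfl) (by
      rw [rel, AddSubgroup.closure_le]
      rintro _ ⟨r, x, y, rfl⟩
      simp [hb])

-- `Rᵈᵐᵃ` is `Rᵐᵒᵖ` as a ring: the action is `(r • c) y = c (r.unop • y)`.
instance : Module Rᵐᵒᵖ (CharacterModule Y) :=
  Module.compHom (R := Rᵈᵐᵃ) (Y →+ AddCircle (1 : ℚ)) (RingHom.id Rᵐᵒᵖ)

def homToChar (f : X →ₗ[Rᵐᵒᵖ] CharacterModule Y) : CharacterModule (Tens R X Y) :=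
  lift (G := AddCircle (1 : ℚ)) f.toAddMonoidHom fun r x y => by
    show f (MulOpposite.op r • x) y = f x (r • y)
    rw [map_smul]
    rfl

def charToHom (φ : CharacterModule (Tens R X Y)) : X →ₗ[Rᵐᵒᵖ] CharacterModule Y where
  toFun x := φ.comp (mk.comp (TensorProduct.mk ℤ X Y x).toAddMonoidHom)
  map_add' x x' := by
    ext y
    show φ (mk ((x + x') ⊗ₜ[ℤ] y)) = φ (mk (x ⊗ₜ[ℤ] y)) + φ (mk (x' ⊗ₜ[ℤ] y))
    rw [TensorProduct.add_tmul, map_add, map_add]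
  map_smul' r x := by
    ext y
    exact congrArg φ (mk_op_smul_tmul r.unop x y)

lemma exists_charSection_of_injective_tmap {N L : Type u} [AddCommGroup N] [Module R N]
    [AddCommGroup L] [Module R L] (i : N →ₗ[R] L)
    (hi : Function.Injective (tmap (LinearMap.id : CharacterModule N →ₗ[Rᵐᵒᵖ] _) i)) :
    ∃ s : CharacterModule N →ₗ[Rᵐᵒᵖ] CharacterModule L, ∀ c n, s c (i n) = c n := by
  obtain ⟨χ, hχ⟩ := CharacterModule.dual_surjective_of_injective (tmap _ i).toIntLinearMap hi
    (homToChar LinearMap.id)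
  exact ⟨charToHom χ, fun c n => DFunLike.congr_fun hχ (mk (c ⊗ₜ[ℤ] n))⟩

lemma mem_range_tmap_of_charSection {A₀ A N L : Type u} [AddCommGroup A₀] [Module Rᵐᵒᵖ A₀]
    [AddCommGroup A] [Module Rᵐᵒᵖ A] [AddCommGroup N] [Module R N] [AddCommGroup L] [Module R L]
    (d : A₀ →ₗ[Rᵐᵒᵖ] A) (i : N →ₗ[R] L) (s : CharacterModule N →ₗ[Rᵐᵒᵖ] CharacterModule L)
    (hs : ∀ c n, s c (i n) = c n) {x : Tens R A N}
    (hx : tmap LinearMap.id i x ∈ (tmap d LinearMap.id).range) :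
    x ∈ (tmap d LinearMap.id).range := by
  by_contra hx'
  obtain ⟨φ, hφd, hφx⟩ := CharacterModule.exists_eq_zero_on_apply_ne_zero_of_notMem hx'
  let ψ : Tens R A L →+ AddCircle (1 : ℚ) := homToChar (s ∘ₗ charToHom φ)
  have hψi : ψ.comp (tmap LinearMap.id i) = φ := by
    ext a n
    exact hs _ n
  have hφd' : charToHom φ ∘ₗ d = 0 := by
    ext a n
    exact hφd _ ⟨mk (a ⊗ₜ[ℤ] n), rfl⟩
  have hψd : ψ.comp (tmap d LinearMap.id) = 0 := by
    ext a l
    show s ((charToHom φ ∘ₗ d) a) l = 0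
    rw [hφd', LinearMap.zero_apply, map_zero]
    rfl
  obtain ⟨y, hy⟩ := hx
  apply hφx
  rw [← hψi, AddMonoidHom.comp_apply, ← hy, ← AddMonoidHom.comp_apply, hψd]
  rfl

end NCT

lemma tensCplx_exactAt_iff {R : Type u} [Ring R] (Fc : CochainComplex (ModuleCat.{u} Rᵐᵒᵖ) ℤ)
    (N : ModuleCat.{u} R) (n : ℤ) :
    (tensCplx Fc N).ExactAt n ↔ ∀ x : NCT.Tens R (Fc.X n) N,
      NCT.tmap (Fc.d n (n + 1)).hom LinearMap.id x = 0 →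
        x ∈ (NCT.tmap (Fc.d (n - 1) n).hom LinearMap.id).range := by
  rw [HomologicalComplex.exactAt_iff' _ (n - 1) n (n + 1) (by simp) (by simp),
    ShortComplex.ab_exact_iff]
  rfl

/-- **Purity and acyclicity of tensor products.**
Let `R` be a ring, `M` a pure submodule of a left `R`-module `L` (i.e. for every right
`R`-module `N` the map `N ⊗_R M → N ⊗_R L` is injective), and `F^•` a complex of right
`R`-modules such that `F^• ⊗_R L` is acyclic.  Then `F^• ⊗_R M` is acyclic. -/
theorem tensor_acyclic_of_pure_submodule
    (R : Type u) [Ring R] (L : Type u) [AddCommGroup L] [Module R L]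
    (M : Submodule R L)
    (hpure : ∀ (N : Type u) [AddCommGroup N] [Module Rᵐᵒᵖ N],
      Function.Injective
        (NCT.tmap (LinearMap.id : N →ₗ[Rᵐᵒᵖ] N) M.subtype))
    (Fc : CochainComplex (ModuleCat.{u} Rᵐᵒᵖ) ℤ)
    (hL : ∀ n : ℤ, (tensCplx Fc (ModuleCat.of R L)).ExactAt n) :
    ∀ n : ℤ, (tensCplx Fc (ModuleCat.of R M)).ExactAt n := by
  obtain ⟨s, hs⟩ := NCT.exists_charSection_of_injective_tmap M.subtype (hpure _)
  intro n
  rw [tensCplx_exactAt_iff]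
  intro x hx
  refine NCT.mem_range_tmap_of_charSection _ M.subtype s hs
    ((tensCplx_exactAt_iff _ _ n).1 (hL n) _ ?_)
  rw [NCT.tmap_id_tmap_id_comm, hx, map_zero]
end
end

section
/- Let L^• be a bounded acyclic complex of left R-modules and I^• a complex of injective left R-modules. Then the total Hom complex Hom_R(L^•, I^•) is an acyclic complex of abelian groups. -/
/-!
An `n`-cocycle of `Hom(L, I)` is a chain map `L ⟶ I⟦n⟧`, and it is a coboundary exactly when
that map is null-homotopic. A null-homotopy is built degree by degree from below: `L` vanishes
below some degree, so the zero homotopy is correct there, and the correction in the next degree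
extends a map defined on the boundaries of `L` (which are all the cycles, by acyclicity) to an
injective term of `I`. The approximations stabilise degreewise, and their limit is the homotopy.
-/
open CategoryTheory

universe u

namespace CochainComplex

open HomComplex

variable {C : Type*} [Category* C] [Abelian C]

open Cochain.InductionUp in
lemma nonempty_homotopy_zero_of_eqUpTo {K L : CochainComplex C ℤ} (f : K ⟶ L) (d : ℤ)
    (hK : ∀ m, d ≤ m → K.ExactAt m) (hL : ∀ m, d ≤ m → Injective (L.X m))
    (α₀ : Cochain K L (-1)) (hα₀ : (δ (-1) 0 α₀).EqUpTo (Cochain.ofHom f) (d - 1)) :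
    Nonempty (Homotopy f 0) := by
  let X (k : ℕ) : Set (Cochain K L (-1)) :=
    Set.ofPred fun α => (δ (-1) 0 α).EqUpTo (Cochain.ofHom f) (k + d - 1)
  let x₀ : X 0 := ⟨α₀, by simpa [X] using hα₀⟩
  let φ (k : ℕ) (α : X k) : X (k + 1) :=
    have := hL ((k + 1 : ℕ) + d - 1) (by lia)
    ⟨_, (isKInjective_of_injective_aux f α.1 (k + d - 1) ((k + 1 : ℕ) + d - 1)
      (by lia) (hK _ (by lia)) α.2).choose_spec⟩
  have hφ (k : ℕ) (α : X k) : (φ k α).1.EqUpTo α.1 (d + k) := fun p q hpq hp => by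
    dsimp [φ]
    rw [add_eq_left, Cochain.single_v_eq_zero _ _ _ _ _ (by lia)]
  refine ⟨(Cochain.equivHomotopy f 0).symm ⟨limitSequence φ hφ x₀, ?_⟩⟩
  rw [Cochain.ofHom_zero, add_zero]
  ext n
  -- in degree `n` the limit agrees with the `k`-th approximation, which is exact there
  let k := (n - d + 1).toNat
  rw [← (sequence φ x₀ k).2 n n (add_zero n) (by lia),
    δ_v (-1) 0 (neg_add_cancel 1) _ n n (by lia) (n - 1) (n + 1) rfl (by lia),
    δ_v (-1) 0 (neg_add_cancel 1) _ n n (by lia) (n - 1) (n + 1) rfl (by lia),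
    limitSequence_eqUpTo φ hφ x₀ k n (n - 1) (by lia) (by lia),
    limitSequence_eqUpTo φ hφ x₀ k (n + 1) n (by lia) (by lia)]

lemma nonempty_homotopy_zero_of_isStrictlyGE {K L : CochainComplex C ℤ} (f : K ⟶ L) (d : ℤ)
    [K.IsStrictlyGE d] (hK : K.Acyclic) (hL : ∀ m, Injective (L.X m)) :
    Nonempty (Homotopy f 0) :=
  nonempty_homotopy_zero_of_eqUpTo f d (fun m _ => hK m) (fun m _ => hL m) 0
    fun p _ _ hp => (K.isZero_of_isStrictlyGE d p (by lia)).eq_of_src _ _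

lemma mem_coboundaries_of_isStrictlyGE {K L : CochainComplex C ℤ} {n : ℤ} (z : Cocycle K L n)
    (d : ℤ) [K.IsStrictlyGE d] (hK : K.Acyclic) (hL : ∀ m, Injective (L.X m)) :
    z ∈ coboundaries K L n := by
  rw [← CohomologyClass.toHom_mk_eq_zero_iff, CohomologyClass.toHom_mk,
    HomotopyCategory.quotient_map_eq_zero_iff]
  exact nonempty_homotopy_zero_of_isStrictlyGE _ d hK fun m => hL (m + n)

lemma homComplex_exactAt_iff (K L : CochainComplex C ℤ) (n : ℤ) :
    (HomComplex K L).ExactAt n ↔ ∀ z : Cocycle K L n, z ∈ coboundaries K L n := by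
  rw [HomologicalComplex.exactAt_iff' _ (n - 1) n (n + 1) (by simp) (by simp),
    ShortComplex.ab_exact_iff]
  refine ⟨fun h z => ?_, fun h z hz => ?_⟩
  · obtain ⟨α, hα⟩ := h z.1 z.2
    exact (mem_coboundaries_iff z (n - 1) (by lia)).2 ⟨α, hα⟩
  · exact (mem_coboundaries_iff ⟨z, hz⟩ (n - 1) (by lia)).1 (h ⟨z, hz⟩)

end CochainComplex

open CochainComplex in
/-- **Hom from a bounded acyclic complex into a termwise-injective complex.**
Let `L^•` be a bounded acyclic complex of left `R`-modules and `I^•` a complex of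
injective left `R`-modules.  Then the total Hom complex `Hom_R(L^•, I^•)` is an acyclic
complex of abelian groups. -/
theorem homComplex_acyclic_of_bounded_acyclic_of_termwise_injective
    (R : Type u) [Ring R]
    (Lc : CochainComplex (ModuleCat.{u} R) ℤ)
    (hbdd : ∃ a b : ℤ, ∀ n : ℤ, (n < a ∨ b < n) → Subsingleton (Lc.X n))
    (hacyclic : ∀ n : ℤ, Lc.ExactAt n)
    (Ic : CochainComplex (ModuleCat.{u} R) ℤ)
    (hinj : ∀ n : ℤ, Module.Injective R (Ic.X n)) :
    ∀ n : ℤ, (CochainComplex.HomComplex Lc Ic).ExactAt n := by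
  obtain ⟨a, _, hzero⟩ := hbdd
  have : Lc.IsStrictlyGE a := (Lc.isStrictlyGE_iff a).2 fun p hp =>
    have := hzero p (Or.inl hp)
    ModuleCat.isZero_of_subsingleton _
  intro n
  rw [homComplex_exactAt_iff]
  exact fun z => mem_coboundaries_of_isStrictlyGE z a hacyclic fun m =>
    Module.injective_object_of_injective_module (inj := hinj m)
end

section
/- Let R be a ring of cardinality at most ν for an infinite cardinal ν, let λ be a regular cardinal with ν^{<λ} = ν, and let M be an R-module. Then for every subset X ⊆ M of cardinality at most ν there exists a submodule N ⊆ M of cardinality at most ν containing X such that every system of fewer than λ nonhomogeneous R-linear equations in fewer than λ variables with parameters from N that has a solution in M has a solution in N. -/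
/-!
Build an increasing chain `(N i)` of submodules of size `≤ ν`, indexed by the well-order of type
`λ`, where `N i` contains `X`, all earlier `N j` and a solution of every solvable system of
fewer than `λ` equations with parameters in `P := ⋃ j < i, N j`. After renaming the variables
into a fixed set of size `λ ≤ ν` (as `ν ^ ν > ν`), such a system is a subset of size `< λ` of a
set of size `≤ ν`, so there are at most `ν ^< λ = ν` of them and each stage stays of size `≤ ν`.
The union `N` has size `≤ λ * ν = ν`, and since `λ` is regular, the fewer than `λ` parameters
of a system over `N` all lie below some stage, where the system was solved.
-/

universe u

open Cardinal Set Submodule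

namespace Cardinal

theorem le_of_powerlt_eq_self {a b : Cardinal.{u}} (ha : 2 ≤ a) (h : a ^< b = a) : b ≤ a := by
  by_contra! hab
  exact (cantor a).not_ge ((power_le_power_right ha).trans ((le_powerlt a hab).trans h.le))

theorem mk_iUnion_le_of_le {α ι : Type u} {f : ι → Set α} {c : Cardinal.{u}} (hc : ℵ₀ ≤ c)
    (hι : #ι ≤ c) (hf : ∀ i, #(f i) ≤ c) : #(⋃ i, f i) ≤ c :=
  (mk_iUnion_le f).trans (mul_le_of_le hc hι (ciSup_le' hf))

theorem mk_finsupp_le (α β : Type u) [Zero β] : #(α →₀ β) ≤ max ℵ₀ (#α * #β) := by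
  classical
  calc #(α →₀ β) ≤ #(Finset (α × β)) := mk_le_of_injective (Finsupp.graph_injective α β)
    _ ≤ #(List (α × β)) := mk_le_of_surjective List.toFinset_surjective
    _ ≤ max ℵ₀ (#α * #β) := by simpa using mk_list_le_max (α × β)

theorem mk_setOf_mk_lt_le (α : Type u) (c : Cardinal.{u}) :
    #{s : Set α // #s < c} ≤ c * max #α ℵ₀ ^< c := by
  let size (i : c.ord.ToType) : Cardinal.{u} := (Ordinal.ToType.mk.symm i : Ordinal).card
  have hsize (i : c.ord.ToType) : size i < c := lt_ord.1 (Ordinal.ToType.mk.symm i).2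
  have hcover : {s : Set α | #s < c} ⊆ ⋃ i, {s | #s ≤ size i} := fun s hs =>
    mem_iUnion.2 ⟨Ordinal.ToType.mk ⟨(#s).ord, ord_lt_ord.2 hs⟩, by simp [size]⟩
  calc #{s : Set α // #s < c} ≤ #(⋃ i, {s : Set α | #s ≤ size i}) := mk_le_mk_of_subset hcover
    _ ≤ #c.ord.ToType * ⨆ i, #{s : Set α | #s ≤ size i} := mk_iUnion_le _
    _ ≤ c * max #α ℵ₀ ^< c := mul_le_mul' (by simp) <| ciSup_le' fun i =>
      (mk_bounded_set_le α (size i)).trans (le_powerlt _ (hsize i))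

end Cardinal

theorem Order.exists_forall_lt_of_mk_lt_cof {W ι : Type u} [LinearOrder W] (f : ι → W)
    (h : #ι < Order.cof W) : ∃ j, ∀ i, f i < j := by
  by_contra! hf
  have hcof : IsCofinal (range f) := fun j =>
    let ⟨i, hi⟩ := hf j
    ⟨f i, mem_range_self i, hi⟩
  exact ((Order.cof_le hcof).trans mk_range_le).not_gt h

theorem Submodule.mk_span_le_of_le {R M : Type u} [Semiring R] [AddCommMonoid M] [Module R M]
    {s : Set M} {c : Cardinal.{u}} (hc : ℵ₀ ≤ c) (hs : #s ≤ c) (hR : #R ≤ c) :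
    #(span R s) ≤ c := by
  rw [Finsupp.span_eq_range_linearCombination]
  exact mk_range_le.trans <| (mk_finsupp_le s R).trans <| max_le hc (mul_le_of_le hc hs hR)

namespace LinearSystem

variable {R M : Type u} [Semiring R] [AddCommMonoid M] [Module Rᵐᵒᵖ M]

/-- `M` is a right `R`-module through `Rᵐᵒᵖ`; the equations read `∑ v, x v * coef e v = param e`. -/
def IsSolution {V E : Type u} (coef : E → V →₀ R) (param : E → M) (x : V → M) : Prop :=
  ∀ e, (coef e).sum (fun v r => MulOpposite.op r • x v) = param e

theorem isSolution_embDomain_iff {V T E : Type u} (ι : V ↪ T) (coef : E → V →₀ R)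
    (param : E → M) (x : T → M) :
    IsSolution (fun e => (coef e).embDomain ι) param x ↔ IsSolution coef param (x ∘ ι) := by
  simp only [IsSolution, Finsupp.sum_embDomain, Function.comp_apply]

theorem isSolution_range_iff {V E α : Type u} (f : E → α) (coef : α → V →₀ R) (param : α → M)
    (x : V → M) :
    IsSolution (fun q : range f => coef q) (fun q => param q) x ↔
      IsSolution (coef ∘ f) (param ∘ f) x :=
  ⟨fun h e => h ⟨f e, e, rfl⟩, by rintro h ⟨_, e, rfl⟩; exact h e⟩

variable (R) in
/-- `SolvableWithin R lam N N` says that `N` is `lam`-pure in `M`. -/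
def SolvableWithin (lam : Cardinal.{u}) (P Q : Set M) : Prop :=
  ∀ (V E : Type u), #V < lam → #E < lam → ∀ (coef : E → V →₀ R) (param : E → M),
    (∀ e, param e ∈ P) → (∃ x : V → M, IsSolution coef param x) →
      ∃ x : V → M, (∀ v, x v ∈ Q) ∧ IsSolution coef param x

theorem SolvableWithin.mono {lam : Cardinal.{u}} {P P' Q Q' : Set M}
    (h : SolvableWithin R lam P Q) (hP : P' ⊆ P) (hQ : Q ⊆ Q') : SolvableWithin R lam P' Q' :=
  fun V E hV hE coef param hparam hsol =>
    let ⟨x, hx, hxsol⟩ := h V E hV hE coef param (fun e => hP (hparam e)) hsol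
    ⟨x, fun v => hQ (hx v), hxsol⟩

theorem solvableWithin_iUnion {lam : Cardinal.{u}} {W : Type u} [LinearOrder W]
    (hW : lam ≤ Order.cof W) (N : W → Set M)
    (hN : ∀ j, SolvableWithin R lam (⋃ i : Iio j, N i) (N j)) :
    SolvableWithin R lam (⋃ j, N j) (⋃ j, N j) := by
  intro V E hV hE coef param hparam hsol
  choose stage hstage using fun e => mem_iUnion.1 (hparam e)
  obtain ⟨j, hj⟩ := Order.exists_forall_lt_of_mk_lt_cof stage (hE.trans_le hW)
  exact (hN j).mono (fun m hm => hm) (subset_iUnion N j) V E hV hE coef param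
    (fun e => mem_iUnion.2 ⟨⟨stage e, hj e⟩, hstage e⟩) hsol

variable {ν lam : Cardinal.{u}}

theorem exists_superset_solvableWithin (hν : ℵ₀ ≤ ν) (hRν : #R ≤ ν) (hlamν : lam ≤ ν)
    (hpow : ν ^< lam = ν) (P : Set M) :
    ∃ Q : Set M, P ⊆ Q ∧ (#P ≤ ν → #Q ≤ ν) ∧ SolvableWithin R lam P Q := by
  let T := lam.out
  let Sys := {S : Set ((T →₀ R) × P) // #S < lam ∧
    ∃ x, IsSolution (fun q : S => q.1.1) (fun q => (q.1.2 : M)) x}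
  choose sol hsol using fun S : Sys => S.2.2
  refine ⟨P ∪ ⋃ S : Sys, range (sol S), subset_union_left, fun hP => ?_, ?_⟩
  · have hT : #T ≤ ν := (mk_out lam).trans_le hlamν
    have hEqs : #((T →₀ R) × P) ≤ ν := by
      rw [mk_prod, lift_id, lift_id]
      exact mul_le_of_le hν ((mk_finsupp_le T R).trans
        (max_le hν (mul_le_of_le hν hT hRν))) hP
    have hSys : #Sys ≤ ν := calc
      #Sys ≤ #{S : Set ((T →₀ R) × P) // #S < lam} := mk_subtype_mono fun _ h => h.1
      _ ≤ lam * max #((T →₀ R) × P) ℵ₀ ^< lam := mk_setOf_mk_lt_le _ lam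
      _ ≤ ν * ν ^< lam := mul_le_mul' hlamν <| powerlt_le.2 fun μ hμ =>
        (power_le_power_right (max_le hEqs hν)).trans (le_powerlt ν hμ)
      _ = ν := by rw [hpow, mul_eq_self hν]
    exact (mk_union_le _ _).trans <| add_le_of_le hν hP <|
      mk_iUnion_le_of_le hν hSys fun S => mk_range_le.trans hT
  · rintro V E hV hE coef param hparam ⟨y, hy⟩
    obtain ⟨ι⟩ : Nonempty (V ↪ T) := by rw [← le_def, mk_out]; exact hV.le
    let f (e : E) : (T →₀ R) × P := ((coef e).embDomain ι, ⟨param e, hparam e⟩)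
    have hf (x : T → M) : IsSolution (fun q : range f => q.1.1) (fun q => (q.1.2 : M)) x ↔
        IsSolution coef param (x ∘ ι) :=
      (isSolution_range_iff f Prod.fst (fun q => (q.2 : M)) x).trans
        (isSolution_embDomain_iff ι coef param x)
    let S : Sys := ⟨range f, mk_range_le.trans_lt hE, Function.extend ι y 0,
      (hf _).2 (by rwa [Function.extend_comp ι.injective])⟩
    exact ⟨sol S ∘ ι, fun v => subset_union_right (mem_iUnion_of_mem S (mem_range_self _)),
      (hf _).1 (hsol S)⟩

theorem exists_monotone_solvableWithin_chain (hν : ℵ₀ ≤ ν) (hRν : #R ≤ ν) (hlamν : lam ≤ ν)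
    (hpow : ν ^< lam = ν) {W : Type u} [LinearOrder W] [WellFoundedLT W] (hW : #W ≤ ν)
    (X : Set M) (hX : #X ≤ ν) :
    ∃ N : W → Submodule Rᵐᵒᵖ M, Monotone N ∧ (∀ i, X ⊆ N i) ∧ (∀ i, #(N i) ≤ ν) ∧
      ∀ j, SolvableWithin R lam (⋃ i : Iio j, (N i : Set M)) (N j) := by
  choose step hstep hstep_card hstep_solv using
    exists_superset_solvableWithin (M := M) hν hRν hlamν hpow
  obtain ⟨N, hN⟩ : ∃ N : W → Submodule Rᵐᵒᵖ M,
      ∀ j, N j = span Rᵐᵒᵖ (step (X ∪ ⋃ i : Iio j, (N i : Set M))) :=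
    ⟨wellFounded_lt.fix fun j N => span Rᵐᵒᵖ (step (X ∪ ⋃ i : Iio j, (N i i.2 : Set M))),
      fun j => wellFounded_lt.fix_eq _ _⟩
  have hstep_le (j : W) : step (X ∪ ⋃ i : Iio j, (N i : Set M)) ⊆ N j := by
    rw [hN j]; exact subset_span
  have hlt {i j : W} (h : i < j) : N i ≤ N j := fun m hm =>
    hstep_le j (hstep _ (subset_union_right (mem_iUnion_of_mem ⟨i, h⟩ hm)))
  refine ⟨N, monotone_iff_forall_lt.2 fun _ _ => hlt,
    fun j => subset_union_left.trans ((hstep _).trans (hstep_le j)), fun j => ?_,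
    fun j => (hstep_solv _).mono subset_union_right (hstep_le j)⟩
  induction j using WellFoundedLT.induction with
  | _ j ih =>
    rw [hN j]
    refine mk_span_le_of_le hν (hstep_card _ ?_) (by rwa [mk_mulOpposite])
    exact (mk_union_le _ _).trans <| add_le_of_le hν hX <|
      mk_iUnion_le_of_le hν ((mk_subtype_le _).trans hW) fun i => ih i i.2

end LinearSystem

open LinearSystem in
/-- **Lemma (Hill-type closure lemma).**
Let `R` be a ring of cardinality at most `ν` for an infinite cardinal `ν`, let `λ` be
a regular cardinal with `ν ^< λ = ν`, and let `M` be a (right) `R`-module.  Then for every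
subset `X ⊆ M` of cardinality at most `ν` there exists a submodule `N ⊆ M` of cardinality
at most `ν` containing `X` such that every system of fewer than `λ` nonhomogeneous
`R`-linear equations in fewer than `λ` variables with parameters from `N` that has
a solution in `M` has a solution in `N`. -/
theorem exists_solution_closed_submodule_of_small
    (R : Type u) [Ring R] (M : Type u) [AddCommGroup M] [Module Rᵐᵒᵖ M]
    (ν : Cardinal.{u}) (hν : Cardinal.aleph0 ≤ ν) (hRν : Cardinal.mk R ≤ ν)
    (lam : Cardinal.{u}) (hlam : lam.IsRegular) (hpow : ν ^< lam = ν)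
    (X : Set M) (hX : Cardinal.mk X ≤ ν) :
    ∃ N : Submodule Rᵐᵒᵖ M, X ⊆ (N : Set M) ∧ Cardinal.mk N ≤ ν ∧
      ∀ (V E : Type u), Cardinal.mk V < lam → Cardinal.mk E < lam →
        ∀ (coef : E → V →₀ R) (param : E → M), (∀ e, param e ∈ N) →
          (∃ x : V → M, ∀ e, (coef e).sum (fun v r => MulOpposite.op r • x v) = param e) →
          ∃ x : V → M, (∀ v, x v ∈ N) ∧
            ∀ e, (coef e).sum (fun v r => MulOpposite.op r • x v) = param e := by
  have hlamν : lam ≤ ν := le_of_powerlt_eq_self ((natCast_lt_aleph0 (n := 2)).le.trans hν) hpow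
  have hW : #lam.ord.ToType = lam := by simp
  have : Nonempty lam.ord.ToType := mk_ne_zero_iff.1 (by rw [hW]; exact hlam.pos.ne')
  obtain ⟨N, hmono, hXN, hcard, hsolv⟩ :=
    exists_monotone_solvableWithin_chain hν hRν hlamν hpow (hW.trans_le hlamν) X hX
  have hcoe : ((⨆ i, N i : Submodule Rᵐᵒᵖ M) : Set M) = ⋃ i, (N i : Set M) :=
    coe_iSup_of_directed N hmono.directed_le
  refine ⟨⨆ i, N i, ?_, ?_, ?_⟩
  · rw [hcoe]
    exact (hXN (Classical.arbitrary _)).trans (subset_iUnion (fun i => (N i : Set M)) _)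
  · change #((⨆ i, N i : Submodule Rᵐᵒᵖ M) : Set M) ≤ ν
    rw [hcoe]; exact mk_iUnion_le_of_le hν (hW.trans_le hlamν) hcard
  · have hcof : lam ≤ Order.cof lam.ord.ToType := by rw [Ordinal.cof_toType, hlam.cof_ord]
    have := solvableWithin_iUnion hcof (fun i => (N i : Set M)) hsolv
    rw [← hcoe] at this
    exact this
end

section
/- Let R be a ring, λ a regular cardinal, and S an R-module admitting an exact sequence P_2 → P_1 → P_0 → S → 0 with P_0, P_1, P_2 projective modules with fewer than λ generators each. Then for any λ-directed diagram (M_ξ) of right R-modules with colimit M, if Ext^1_R(S, M_ξ) = 0 for all ξ, then Ext^1_R(S, M) = 0; i.e., the class {S}^{⊥₁} is closed under λ-directed colimits. -/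
/-!
Extend `P₂ ⟶ P₁ ⟶ P₀ ⟶ S` to a projective resolution of `S`. Then `Ext¹(S, N) = 0` says
exactly that every `f : P₁ ⟶ N` killed by `d₂` factors through `d₁`. Given such an `f` into
the colimit, the projective module `P₁`, having fewer than `λ` generators, maps into some stage
`M_j` through the colimit; `d₂ ≫ f = 0` in the colimit, and since `P₂` has fewer than `λ`
generators, this composite already vanishes at a later stage `M_k`. The factorization through
`d₁` obtained at `M_k` from `Ext¹(S, M_k) = 0` then yields the one at the colimit.
-/

open CategoryTheory Limits Opposite

universe u

namespace CategoryTheory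

lemma Projective.d_comp {C : Type*} [Category C] [Abelian C] [EnoughProjectives C] {X Y : C}
    (f : X ⟶ Y) : Projective.d f ≫ f = 0 :=
  (Category.assoc _ _ _).trans (by simp only [kernel.condition]; exact comp_zero)

lemma exact_iso_hom_comp_d {C : Type*} [Category C] [Abelian C] [EnoughProjectives C]
    {A B Z : C} (f : A ⟶ B) (e : Z ≅ Projective.syzygies f) :
    (ShortComplex.mk (e.hom ≫ Projective.d f) f
      (by rw [Category.assoc, Projective.d_comp, comp_zero])).Exact :=
  (ShortComplex.exact_iff_of_epi_of_isIso_of_mono { τ₁ := e.hom, τ₂ := 𝟙 A, τ₃ := 𝟙 B } :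
    _ ↔ (ShortComplex.mk _ _ (Projective.d_comp f)).Exact).2 (exact_d_f f)

namespace ProjectiveResolution

variable {C : Type*} [Category C] [Abelian C] [EnoughProjectives C]
  {X P₀ P₁ P₂ : C} {d₂ : P₂ ⟶ P₁} {d₁ : P₁ ⟶ P₀} {ε : P₀ ⟶ X}
  (w₂ : d₂ ≫ d₁ = 0) (w₁ : d₁ ≫ ε = 0)

variable (d₂ d₁) in
noncomputable def ofPartialComplex : ChainComplex C ℕ :=
  ChainComplex.mk P₀ P₁ P₂ d₁ d₂ w₂
    (fun T => ⟨Projective.syzygies T.f, Projective.d T.f, Projective.d_comp T.f⟩)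

@[simp]
lemma ofPartialComplex_d_1_0 : (ofPartialComplex d₂ d₁ w₂).d 1 0 = d₁ := by
  simp [ofPartialComplex]

@[simp]
lemma ofPartialComplex_d_2_1 : (ofPartialComplex d₂ d₁ w₂).d 2 1 = d₂ := by
  simp [ofPartialComplex]

lemma ofPartialComplex_exactAt_succ (h₁ : (ShortComplex.mk d₂ d₁ w₂).Exact) :
    ∀ n, (ofPartialComplex d₂ d₁ w₂).ExactAt (n + 1)
  | 0 => by
    rw [HomologicalComplex.exactAt_iff' _ 2 1 0 (by simp) (by simp)]
    dsimp only [HomologicalComplex.sc', HomologicalComplex.shortComplexFunctor']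
    simp only [ofPartialComplex_d_2_1, ofPartialComplex_d_1_0]
    exact h₁
  | n + 1 => by
    rw [HomologicalComplex.exactAt_iff' _ (n + 3) (n + 2) (n + 1) (by simp) (by simp)]
    dsimp only [HomologicalComplex.sc', HomologicalComplex.shortComplexFunctor']
    simp only [ofPartialComplex, ChainComplex.mk_d]
    exact exact_iso_hom_comp_d _ _

variable [Projective P₀] [Projective P₁] [Projective P₂]

instance (n : ℕ) : Projective ((ofPartialComplex d₂ d₁ w₂).X n) := by
  obtain (_ | _ | _ | n) := n
  · exact ‹Projective P₀›
  · exact ‹Projective P₁›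
  · exact ‹Projective P₂›
  · apply Projective.projective_over

variable (d₂ d₁ ε) in
noncomputable def ofPartial (h₁ : (ShortComplex.mk d₂ d₁ w₂).Exact)
    (h₀ : (ShortComplex.mk d₁ ε w₁).Exact) [Epi ε] : ProjectiveResolution X where
  complex := ofPartialComplex d₂ d₁ w₂
  π := (ChainComplex.toSingle₀Equiv _ _).symm ⟨ε, by rw [ofPartialComplex_d_1_0]; exact w₁⟩
  quasiIso := ⟨fun n => by
    cases n with
    | zero =>
      rw [ChainComplex.quasiIsoAt₀_iff, ShortComplex.quasiIso_iff_of_zeros']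
      · refine (ShortComplex.exact_and_epi_g_iff_of_iso ?_).2 ⟨h₀, ‹Epi ε›⟩
        exact ShortComplex.isoMk (Iso.refl _) (Iso.refl _) (Iso.refl _)
          (by
            simp only [Iso.refl_hom, HomologicalComplex.shortComplexFunctor'_obj_f,
              ofPartialComplex_d_1_0]
            exact (Category.id_comp _).trans (Category.comp_id _).symm)
          ((Category.id_comp _).trans
            ((ChainComplex.toSingle₀Equiv_symm_apply_f_zero
              (C := ofPartialComplex d₂ d₁ w₂) ε _).symm.trans (Category.comp_id _).symm))
      all_goals rfl
    | succ n =>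
      rw [quasiIsoAt_iff_exactAt']
      · exact ofPartialComplex_exactAt_succ w₂ h₁ n
      · exact ChainComplex.exactAt_succ_single_obj _ _⟩

variable {R : Type*} [Ring R] [Linear R C]

lemma subsingleton_ext_one_iff (P : ProjectiveResolution X) (Y : C) :
    Subsingleton (((Ext R C 1).obj (op X)).obj Y) ↔
      ∀ f : P.complex.X 1 ⟶ Y, P.complex.d 2 1 ≫ f = 0 →
        ∃ g : P.complex.X 0 ⟶ Y, P.complex.d 1 0 ≫ g = f := by
  rw [← ModuleCat.isZero_iff_subsingleton, (P.isoExt 1 Y).isZero_iff,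
    ← HomologicalComplex.exactAt_iff_isZero_homology,
    HomologicalComplex.exactAt_iff' _ 0 1 2 (by simp) (by simp), ShortComplex.moduleCat_exact_iff]
  rfl

variable (d₂ d₁ ε) in
lemma subsingleton_ext_one_iff_of_exact (h₁ : (ShortComplex.mk d₂ d₁ w₂).Exact)
    (h₀ : (ShortComplex.mk d₁ ε w₁).Exact) [Epi ε] (Y : C) :
    Subsingleton (((Ext R C 1).obj (op X)).obj Y) ↔
      ∀ f : P₁ ⟶ Y, d₂ ≫ f = 0 → ∃ g : P₀ ⟶ Y, d₁ ≫ g = f := by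
  have := (ofPartial d₂ d₁ ε w₂ w₁ h₁ h₀).subsingleton_ext_one_iff (R := R) Y
  simp only [ofPartial, ofPartialComplex_d_2_1, ofPartialComplex_d_1_0] at this
  exact this

end ProjectiveResolution

end CategoryTheory

lemma isCardinalFiltered_of_bddAbove {J : Type u} [Preorder J] (κ : Cardinal.{u})
    [Fact κ.IsRegular] (h : ∀ s : Set J, Cardinal.mk s < κ → BddAbove s) :
    IsCardinalFiltered J κ :=
  isCardinalFiltered_preorder J κ fun _ f hf =>
    let ⟨j, hj⟩ := h (Set.range f) (Cardinal.mk_range_le.trans_lt hf)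
    ⟨j, fun k => hj (Set.mem_range_self k)⟩

namespace ModuleCat

variable {A : Type u} [Ring A] {J : Type u} [SmallCategory J] {κ : Cardinal.{u}}
  [Fact κ.IsRegular] [IsCardinalFiltered J κ] {F : J ⥤ ModuleCat.{u} A} {c : Cocone F}
  (hc : IsColimit c)
include hc

lemma exists_ι_app_eq_of_isColimit {K : Type u} (hK : HasCardinalLT K κ) (x : K → c.pt) :
    ∃ (j : J) (y : K → F.obj j), ∀ k, c.ι.app j (y k) = x k := by
  have := isFiltered_of_isCardinalFiltered J κ
  choose i z hz using fun k => Concrete.isColimit_exists_rep F hc (x k)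
  refine ⟨IsCardinalFiltered.max i hK, fun k => F.map (IsCardinalFiltered.toMax i hK k) (z k),
    fun k => ?_⟩
  rw [← hz k, ← ConcreteCategory.comp_apply, c.w]

lemma exists_hom_comp_ι_app_eq_of_free {K : Type u} (hK : HasCardinalLT K κ)
    (f : ModuleCat.of A (K →₀ A) ⟶ c.pt) :
    ∃ (j : J) (g : ModuleCat.of A (K →₀ A) ⟶ F.obj j), g ≫ c.ι.app j = f := by
  obtain ⟨j, y, hy⟩ := exists_ι_app_eq_of_isColimit hc hK fun k => f (Finsupp.single k 1)
  refine ⟨j, ModuleCat.ofHom (Finsupp.linearCombination A y), ?_⟩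
  ext k : 3
  simp [hy]

lemma exists_hom_comp_ι_app_eq_of_projective {P : ModuleCat.{u} A} [Projective P] {s : Set P}
    (hs : HasCardinalLT s κ) (hspan : Submodule.span A s = ⊤) (f : P ⟶ c.pt) :
    ∃ (j : J) (g : P ⟶ F.obj j), g ≫ c.ι.app j = f := by
  let π : ModuleCat.of A (s →₀ A) ⟶ P := ModuleCat.ofHom (Finsupp.linearCombination A (↑))
  have : Epi π := (ModuleCat.epi_iff_surjective π).2 <| by
    rw [← LinearMap.range_eq_top]
    simpa [π, Finsupp.range_linearCombination] using hspan
  obtain ⟨j, g, hg⟩ := exists_hom_comp_ι_app_eq_of_free hc hs (π ≫ f)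
  exact ⟨j, Projective.factorThru (𝟙 P) π ≫ g, by simp [hg]⟩

lemma exists_comp_map_eq_zero {P : ModuleCat.{u} A} {s : Set P}
    (hs : HasCardinalLT s κ) (hspan : Submodule.span A s = ⊤) {j : J} (g : P ⟶ F.obj j)
    (hg : g ≫ c.ι.app j = 0) : ∃ (k : J) (t : j ⟶ k), g ≫ F.map t = 0 := by
  have := isFiltered_of_isCardinalFiltered J κ
  have hzero (x : s) : ∃ (k : J) (t : j ⟶ k), F.map t (g x) = 0 := by
    obtain ⟨k, t, t', h⟩ := Concrete.isColimit_exists_of_rep_eq F hc (g x) 0 (by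
      rw [map_zero, ← ConcreteCategory.comp_apply, hg]; rfl)
    exact ⟨k, t, h.trans (map_zero _)⟩
  choose k t ht using hzero
  obtain ⟨m, a, b, hab⟩ := IsCardinalFiltered.wideSpan t hs
  refine ⟨m, b, ModuleCat.hom_ext (LinearMap.ext_on hspan fun x hx => ?_)⟩
  simp [← hab ⟨x, hx⟩, ht]

end ModuleCat

/-- **`{S}^{⊥₁}` is closed under `λ`-directed colimits.**
Let `R` be a ring, `λ` a regular cardinal, and `S` a right `R`-module admitting an exact
sequence `P₂ ⟶ P₁ ⟶ P₀ ⟶ S ⟶ 0` with `P₀, P₁, P₂` projective right `R`-modules with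
fewer than `λ` generators each.  If `(M_ξ)` is a `λ`-directed diagram of right `R`-modules
with colimit `M` such that `Ext¹_R(S, M_ξ) = 0` for all `ξ`, then `Ext¹_R(S, M) = 0`.
(Right `R`-modules are modules over `Rᵐᵒᵖ`.) -/
theorem ext_one_perp_closed_under_lambda_directed_colimits
    (R : Type u) [Ring R] (lam : Cardinal.{u}) (hlam : lam.IsRegular)
    (S : ModuleCat.{u} Rᵐᵒᵖ)
    (P₀ P₁ P₂ : ModuleCat.{u} Rᵐᵒᵖ)
    (hproj : Module.Projective Rᵐᵒᵖ P₀ ∧ Module.Projective Rᵐᵒᵖ P₁ ∧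
      Module.Projective Rᵐᵒᵖ P₂)
    (hgen : ∀ P ∈ ({P₀, P₁, P₂} : Set (ModuleCat.{u} Rᵐᵒᵖ)),
      ∃ G : Set P, Cardinal.mk G < lam ∧ Submodule.span Rᵐᵒᵖ G = ⊤)
    (d₂ : P₂ ⟶ P₁) (d₁ : P₁ ⟶ P₀) (ε : P₀ ⟶ S)
    (hex₁ : LinearMap.range d₂.hom = LinearMap.ker d₁.hom)
    (hex₀ : LinearMap.range d₁.hom = LinearMap.ker ε.hom)
    (hsurj : Function.Surjective ε)
    (Ξ : Type u) [PartialOrder Ξ]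
    (hdir : ∀ s : Set Ξ, Cardinal.mk s < lam → ∃ b : Ξ, ∀ x ∈ s, x ≤ b)
    (G : Ξ ⥤ ModuleCat.{u} Rᵐᵒᵖ) (c : Cocone G) (hc : IsColimit c)
    (hvan : ∀ ξ : Ξ,
      Subsingleton (((Ext ℤ (ModuleCat.{u} Rᵐᵒᵖ) 1).obj (op S)).obj (G.obj ξ))) :
    Subsingleton (((Ext ℤ (ModuleCat.{u} Rᵐᵒᵖ) 1).obj (op S)).obj c.pt) := by
  obtain ⟨hP₀, hP₁, hP₂⟩ := hproj
  have : Projective P₀ := (IsProjective.iff_projective P₀).1 hP₀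
  have : Projective P₁ := (IsProjective.iff_projective P₁).1 hP₁
  have : Projective P₂ := (IsProjective.iff_projective P₂).1 hP₂
  have : Epi ε := (ModuleCat.epi_iff_surjective ε).2 hsurj
  have hExt := ProjectiveResolution.subsingleton_ext_one_iff_of_exact (R := ℤ) d₂ d₁ ε
    (ModuleCat.hom_ext (LinearMap.range_le_ker_iff.1 hex₁.le))
    (ModuleCat.hom_ext (LinearMap.range_le_ker_iff.1 hex₀.le))
    (ShortComplex.moduleCat_exact_iff_range_eq_ker _ |>.2 hex₁)
    (ShortComplex.moduleCat_exact_iff_range_eq_ker _ |>.2 hex₀)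
  have : Fact lam.IsRegular := ⟨hlam⟩
  have : IsCardinalFiltered Ξ lam := isCardinalFiltered_of_bddAbove lam hdir
  obtain ⟨s₁, hs₁, hspan₁⟩ := hgen P₁ (by simp)
  obtain ⟨s₂, hs₂, hspan₂⟩ := hgen P₂ (by simp)
  rw [hExt]
  intro f hf
  obtain ⟨j, g, rfl⟩ := ModuleCat.exists_hom_comp_ι_app_eq_of_projective hc
    ((hasCardinalLT_iff_cardinal_mk_lt _ _).2 hs₁) hspan₁ f
  obtain ⟨k, t, ht⟩ := ModuleCat.exists_comp_map_eq_zero hc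
    ((hasCardinalLT_iff_cardinal_mk_lt _ _).2 hs₂) hspan₂ (d₂ ≫ g) (by simpa using hf)
  obtain ⟨h, hh⟩ := (hExt _).1 (hvan k) (g ≫ G.map t) (by simpa using ht)
  exact ⟨h ≫ c.ι.app k, by rw [reassoc_of% hh, c.w]⟩
end

section
/- Let λ be a regular cardinal and R a ring such that every right ideal of R is generated by fewer than λ elements. Then the class of injective right R-modules is closed under λ-directed colimits in the category of right R-modules. -/
/-!
By Baer's criterion it suffices to extend a map `f : I → colim F` from a right ideal `I` to `R`.
Filtering a free module on fewer than `λ` generators by a well-order of its basis, and using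
that the ideals of leading coefficients are generated by fewer than `λ` elements, shows that
its submodules are generated by fewer than `λ` elements; hence `I` has a presentation with
fewer than `λ` generators and relations. Since the diagram is `λ`-directed, the images of the
generators lift to one stage, and the images of the relations, which vanish in the colimit,
already vanish at a later stage `ξ`. So `f` factors through `F ξ`, where it extends to `R`
by injectivity of `F ξ`.
-/

open CategoryTheory Limits Cardinal

universe u

namespace Submodule

variable {A : Type u} [Ring A] {α : Type*}

noncomputable def leadingCoeffIdeal [Preorder α] (N : Submodule A (α →₀ A)) (a : α) : Ideal A :=
  (N ⊓ Finsupp.supported A A (Set.Iic a)).map (Finsupp.lapply a)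

theorem eq_of_le_of_leadingCoeffIdeal_le [LinearOrder α] [WellFoundedLT α]
    {N T : Submodule A (α →₀ A)} (hTN : T ≤ N)
    (h : ∀ a, N.leadingCoeffIdeal a ≤ T.leadingCoeffIdeal a) : T = N := by
  refine le_antisymm hTN fun n hn => ?_
  suffices key : ∀ b : WithBot α, ∀ n ∈ N, n.support.max ≤ b → n ∈ T from key _ n hn le_rfl
  intro b
  induction b using WellFoundedLT.induction with
  | _ b ih =>
  intro n hn hb
  cases b with
  | bot =>
    rw [le_bot_iff, Finset.max_eq_bot, Finsupp.support_eq_empty] at hb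
    exact hb ▸ T.zero_mem
  | coe a =>
    have hna : n ∈ Finsupp.supported A A (Set.Iic a) := fun x hx =>
      WithBot.coe_le_coe.1 ((Finset.le_max hx).trans hb)
    obtain ⟨m, ⟨hmT, hma⟩, hm⟩ := h a ⟨n, ⟨hn, hna⟩, rfl⟩
    replace hm : m a = n a := hm
    have hlt : (n - m).support.max < a := by
      refine lt_of_le_of_ne (Finset.max_le fun x hx => ?_) fun hmax => ?_
      · exact WithBot.coe_le_coe.2 (Finsupp.support_sub hx |> Finset.mem_union.1 |>.elim
          (fun h => hna h) (fun h => hma h))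
      · simpa [hm] using Finsupp.mem_support_iff.1 (Finset.mem_of_max hmax)
    simpa using T.add_mem hmT (ih _ hlt (n - m) (N.sub_mem hn (hTN hmT)) le_rfl)

theorem spanRank_lt_of_forall_ideal_spanRank_lt {lam : Cardinal.{u}}
    (hlam : lam.IsRegular) (hA : ∀ I : Ideal A, I.spanRank < lam) {α : Type u} (hα : #α < lam)
    (N : Submodule A (α →₀ A)) : N.spanRank < lam := by
  let : LinearOrder α := IsWellOrder.linearOrder WellOrderingRel
  have : WellFoundedLT α := ⟨IsWellFounded.wf (r := WellOrderingRel (α := α))⟩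
  have hlift : ∀ a, ∃ T : Set (α →₀ A), T ⊆ N ⊓ Finsupp.supported A A (Set.Iic a) ∧
      #T < lam ∧ span A (Finsupp.lapply (R := A) (M := A) a '' T) = N.leadingCoeffIdeal a := by
    intro a
    obtain ⟨G, hG, hspan⟩ := (N.leadingCoeffIdeal a).exists_span_set_card_eq_spanRank
    have hsurj : Set.SurjOn (Finsupp.lapply a) _ G := hspan ▸ subset_span (s := G)
    obtain ⟨T, hTN, hinj, hTG⟩ := hsurj.exists_subset_injOn_image_eq
    refine ⟨T, hTN, ?_, hTG ▸ hspan⟩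
    rw [← mk_image_eq_of_injOn _ _ hinj, hTG, hG]
    exact hA _
  choose T hTN hTcard hTspan using hlift
  have hS : span A (⋃ a, T a) = N := by
    refine eq_of_le_of_leadingCoeffIdeal_le (span_le.2 (Set.iUnion_subset fun a => (hTN a).trans
      inf_le_left)) fun a => ?_
    rw [← hTspan, span_image]
    refine map_mono (le_inf (span_mono (Set.subset_iUnion T a)) ?_)
    exact span_le.2 ((hTN a).trans inf_le_right)
  calc N.spanRank ≤ #(⋃ a, T a) := hS ▸ spanRank_span_le_card _
    _ < lam := (card_iUnion_lt_iff_forall_of_isRegular hlam hα).2 hTcard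

end Submodule

theorem Module.exists_presentation_card_lt {A : Type u} [Ring A] {lam : Cardinal.{u}}
    (hlam : lam.IsRegular) (hA : ∀ I : Ideal A, I.spanRank < lam)
    {M : Type u} [AddCommGroup M] [Module A M] (hM : (⊤ : Submodule A M).spanRank < lam) :
    ∃ pres : Module.Presentation.{u, u} A M, #pres.G < lam ∧ #pres.R < lam := by
  obtain ⟨G, hG, hGspan⟩ := (⊤ : Submodule A M).exists_span_set_card_eq_spanRank
  obtain ⟨S, hS, hSspan⟩ :=
    (LinearMap.ker (Finsupp.linearCombination A ((↑) : G → M))).exists_span_set_card_eq_spanRank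
  refine ⟨{
      G := G
      R := S
      relation := (↑)
      var := (↑)
      linearCombination_var_relation := fun r => (hSspan ▸ Submodule.subset_span r.2 :
        (r : G →₀ A) ∈ LinearMap.ker _)
      toIsPresentation := (Module.Relations.Solution.isPresentation_iff _).2
        ⟨by simpa using hGspan, by simpa [Module.Relations.Solution.π] using hSspan.symm⟩ },
    hG ▸ hM, ?_⟩
  rw [hS]
  exact Submodule.spanRank_lt_of_forall_ideal_spanRank_lt hlam hA (hG ▸ hM) _

section DirectedColimit

variable {A : Type u} [Ring A] {lam : Cardinal.{u}} {Ξ : Type u} [PartialOrder Ξ]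
  {F : Ξ ⥤ ModuleCat.{u} A} {c : Cocone F}

theorem isFiltered_of_forall_exists_le (hlam : ℵ₀ ≤ lam)
    (hdir : ∀ s : Set Ξ, #s < lam → ∃ b : Ξ, ∀ x ∈ s, x ≤ b) : IsFiltered Ξ := by
  have hfin (s : Set Ξ) (hs : s.Finite) := hdir s (hs.lt_aleph0.trans_le hlam)
  have : Nonempty Ξ := (hfin ∅ Set.finite_empty).nonempty
  have : IsDirected Ξ (· ≤ ·) := ⟨fun x y =>
    let ⟨b, hb⟩ := hfin {x, y} (Set.toFinite _)
    ⟨b, hb x (by simp), hb y (by simp)⟩⟩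
  infer_instance

theorem exists_ι_app_eq_of_card_lt [IsFiltered Ξ]
    (hdir : ∀ s : Set Ξ, #s < lam → ∃ b : Ξ, ∀ x ∈ s, x ≤ b) (hc : IsColimit c)
    {ι : Type u} (hι : #ι < lam) (x : ι → c.pt) :
    ∃ (ξ : Ξ) (y : ι → F.obj ξ), ∀ i, c.ι.app ξ (y i) = x i := by
  choose ξ y hy using fun i => Concrete.isColimit_exists_rep F hc (x i)
  obtain ⟨b, hb⟩ := hdir (Set.range ξ) (mk_range_le.trans_lt hι)
  exact ⟨b, fun i => F.map (homOfLE (hb _ ⟨i, rfl⟩)) (y i), fun i => by rw [c.w_apply, hy]⟩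

theorem exists_map_eq_zero_of_card_lt [IsFiltered Ξ] (hlam : ℵ₀ ≤ lam)
    (hdir : ∀ s : Set Ξ, #s < lam → ∃ b : Ξ, ∀ x ∈ s, x ≤ b) (hc : IsColimit c)
    {ι : Type u} (hι : #ι < lam) {ξ : Ξ} (y : ι → F.obj ξ) (hy : ∀ i, c.ι.app ξ (y i) = 0) :
    ∃ (ξ' : Ξ) (h : ξ ≤ ξ'), ∀ i, F.map (homOfLE h) (y i) = 0 := by
  have hvan (i : ι) : ∃ (ξ' : Ξ) (h : ξ ≤ ξ'), F.map (homOfLE h) (y i) = 0 := by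
    obtain ⟨k, f, _, hk⟩ :=
      Concrete.isColimit_exists_of_rep_eq F hc (y i) 0 (by rw [hy, map_zero])
    exact ⟨k, leOfHom f, (by simpa using hk : F.map f (y i) = 0)⟩
  choose ξ' hle hzero using hvan
  obtain ⟨b, hb⟩ := hdir (insert ξ (Set.range ξ')) (mk_insert_le.trans_lt
    (add_lt_of_lt hlam (mk_range_le.trans_lt hι) (one_lt_aleph0.trans_le hlam)))
  refine ⟨b, hb ξ (Set.mem_insert _ _), fun i => ?_⟩
  have hb' : ξ' i ≤ b := hb _ (Set.mem_insert_of_mem _ ⟨i, rfl⟩)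
  rw [show homOfLE _ = homOfLE (hle i) ≫ homOfLE hb' from rfl, F.map_comp,
    ConcreteCategory.comp_apply, hzero, map_zero]

theorem exists_ι_app_comp_eq_of_presentation [IsFiltered Ξ] (hlam : ℵ₀ ≤ lam)
    (hdir : ∀ s : Set Ξ, #s < lam → ∃ b : Ξ, ∀ x ∈ s, x ≤ b) (hc : IsColimit c)
    {P : Type*} [AddCommGroup P] [Module A P] (pres : Module.Presentation.{u, u} A P)
    (hG : #pres.G < lam) (hR : #pres.R < lam) (f : P →ₗ[A] c.pt) :
    ∃ (ξ : Ξ) (h : P →ₗ[A] F.obj ξ), (c.ι.app ξ).hom ∘ₗ h = f := by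
  obtain ⟨ξ₀, y, hy⟩ := exists_ι_app_eq_of_card_lt hdir hc hG (fun g => f (pres.var g))
  let φ := Finsupp.linearCombination A y
  have hφ : (c.ι.app ξ₀).hom ∘ₗ φ = f ∘ₗ pres.π := by ext g; simp [φ, hy]
  obtain ⟨ξ₁, h01, hzero⟩ := exists_map_eq_zero_of_card_lt hlam hdir hc hR
    (fun r => φ (pres.relation r)) (fun r => by simpa using congr($hφ (pres.relation r)))
  let sol : pres.Solution (F.obj ξ₁) := .ofπ ((F.map (homOfLE h01)).hom ∘ₗ φ) hzero
  refine ⟨ξ₁, pres.desc sol, pres.postcomp_injective ?_⟩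
  ext g
  simp [sol, Module.Relations.Solution.ofπ_var, φ, hy]

end DirectedColimit

/-- **Injective modules are closed under `λ`-directed colimits.**
Let `λ` be a regular cardinal and `R` a ring in which every right ideal is generated by
fewer than `λ` elements.  Then the colimit of any `λ`-directed diagram of injective right
`R`-modules is injective.  (Right `R`-modules are modules over the opposite ring `Rᵐᵒᵖ`;
a right ideal of `R` is a submodule of `R` viewed as a right module over itself.) -/
theorem injective_closed_under_lambda_directed_colimits
    (lam : Cardinal.{u}) (hlam : lam.IsRegular)
    (R : Type u) [Ring R]
    (hR : ∀ I : Submodule Rᵐᵒᵖ R, ∃ G : Set R, Cardinal.mk G < lam ∧ Submodule.span Rᵐᵒᵖ G = I)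
    (Ξ : Type u) [PartialOrder Ξ]
    (hdir : ∀ s : Set Ξ, Cardinal.mk s < lam → ∃ b : Ξ, ∀ x ∈ s, x ≤ b)
    (F : Ξ ⥤ ModuleCat.{u} Rᵐᵒᵖ)
    (hinj : ∀ ξ : Ξ, Module.Injective Rᵐᵒᵖ (F.obj ξ))
    (c : Cocone F) (hc : IsColimit c) :
    Module.Injective Rᵐᵒᵖ c.pt := by
  have hA (I : Ideal Rᵐᵒᵖ) : I.spanRank < lam := by
    let e : R ≃ₗ[Rᵐᵒᵖ] Rᵐᵒᵖ := MulOpposite.opLinearEquiv Rᵐᵒᵖ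
    obtain ⟨G, hG, hspan⟩ := hR (Submodule.comap e.toLinearMap I)
    calc I.spanRank = ((Submodule.comap e.toLinearMap I).map e.toLinearMap).spanRank := by
          rw [Submodule.map_comap_eq_of_surjective e.surjective]
      _ ≤ (Submodule.comap e.toLinearMap I).spanRank := Submodule.spanRank_map_le _ _
      _ ≤ #G := hspan ▸ Submodule.spanRank_span_le_card G
      _ < lam := hG
  have := isFiltered_of_forall_exists_le hlam.aleph0_le hdir
  refine Module.Baer.injective fun I f => ?_
  obtain ⟨pres, hG, hRel⟩ := Module.exists_presentation_card_lt hlam hA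
    ((Submodule.spanRank_top I).trans_lt (hA I))
  obtain ⟨ξ, h, rfl⟩ :=
    exists_ι_app_comp_eq_of_presentation hlam.aleph0_le hdir hc pres hG hRel f
  obtain ⟨H, hH⟩ := (hinj ξ).out I.subtype Subtype.coe_injective h
  exact ⟨(c.ι.app ξ).hom ∘ₗ H, fun x hx => congrArg (c.ι.app ξ) (hH ⟨x, hx⟩)⟩
end

section
/- Let R be a left Noetherian ring. Then every injective left R-module is a direct sum of indecomposable injective left R-modules, and each indecomposable injective left R-module is the injective envelope of a cyclic module R/I for some left ideal I ⊆ R; consequently there is, up to isomorphism, only a set of indecomposable injective left R-modules, each of cardinality at most |R| + ℵ₀. -/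
open CategoryTheory

universe u

/-- A module is indecomposable if it is nonzero and is not the (internal) direct sum of two
nonzero submodules. -/
def IsIndecomposableModule (R : Type u) [Ring R] (M : Type u) [AddCommGroup M]
    [Module R M] : Prop :=
  Nontrivial M ∧ ∀ N P : Submodule R M, IsCompl N P → N = ⊥ ∨ P = ⊥

/-- A submodule `N ⊆ M` is essential if it intersects every nonzero submodule
nontrivially. -/
def IsEssentialSubmodule {R : Type u} [Ring R] {M : Type u} [AddCommGroup M] [Module R M]
    (N : Submodule R M) : Prop :=
  ∀ P : Submodule R M, P ≠ ⊥ → N ⊓ P ≠ ⊥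

/-!
Inside an injective module `M`, every submodule `N` is essential in a direct summand `X` of `M`:
take `C` maximal disjoint from `N` and then `X ⊇ N` maximal disjoint from `C`. Consequently an
injective module is indecomposable iff it is uniform (any two nonzero submodules meet), and then
every nonzero cyclic submodule `R ∙ x ≅ R ⧸ I` is essential.

Over a left Noetherian ring every ideal is finitely generated, so by Baer's criterion the union of
a directed family of injective submodules is injective, and every nonzero cyclic module contains a
uniform submodule. Zorn's lemma applied to independent families of uniform injective submodules
then decomposes `M`. For the bound, adjoining to `R ∙ x` countably often one solution of every
extension problem `I → W` produces an injective submodule of size at most `|R| + ℵ₀`; it is a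
summand, hence all of an indecomposable `M`. Modules that small are quotients of one fixed free
module, which gives a set of representatives.
-/

universe v

section Lattice

variable {α : Type*}

def IsEssentialIn [PartialOrder α] [OrderBot α] (a b : α) : Prop :=
  a ≤ b ∧ ∀ c ≤ b, Disjoint a c → c = ⊥

def IsUniform [PartialOrder α] [OrderBot α] (u : α) : Prop :=
  ∀ a ≤ u, ∀ b ≤ u, Disjoint a b → a = ⊥ ∨ b = ⊥

theorem IsEssentialIn.isUniform [Lattice α] [OrderBot α] {a b : α} (hab : IsEssentialIn a b)
    (ha : IsUniform a) : IsUniform b := by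
  intro c hc d hd hcd
  refine (ha (a ⊓ c) inf_le_left (a ⊓ d) inf_le_left (hcd.mono inf_le_right inf_le_right)).imp
    (fun h => hab.2 c hc (disjoint_iff.mpr h)) (fun h => hab.2 d hd (disjoint_iff.mpr h))

theorem sSupIndep.insert_of_disjoint [CompleteLattice α] [IsModularLattice α] {s : Set α}
    {a : α} (hs : sSupIndep s) (ha : Disjoint a (sSup s)) : sSupIndep (insert a s) := by
  intro x hx
  obtain rfl | hxa := eq_or_ne x a
  · exact ha.mono_right (sSup_le_sSup fun y hy => hy.1.resolve_left hy.2)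
  · have hxs : x ∈ s := hx.resolve_left hxa
    rw [Set.insert_sdiff_of_notMem _ (Set.mem_singleton_iff.not.mpr hxa.symm), sSup_insert,
      sup_comm]
    exact (hs hxs).disjoint_sup_right_of_disjoint_sup_left
      (ha.symm.mono_left (sup_le (le_sSup hxs) (sSup_le_sSup Set.sdiff_subset)))

theorem exists_le_maximal_disjoint [CompleteLattice α] [IsCompactlyGenerated α] {a b : α}
    (h : Disjoint a b) : ∃ x, b ≤ x ∧ Maximal (Disjoint a) x :=
  zorn_le_nonempty₀ {x | Disjoint a x}
    (fun _ hs hchain _ _ => ⟨_, hchain.directedOn.disjoint_sSup_right.2 hs, fun _ => le_sSup⟩)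
    b h

theorem isEssentialIn_of_maximal_disjoint [Lattice α] [OrderBot α] [IsModularLattice α]
    {a c x : α} (hc : Maximal (Disjoint a) c) (hax : a ≤ x) (hxc : Disjoint x c) :
    IsEssentialIn a x := by
  refine ⟨hax, fun p hpx hap => le_bot_iff.mp (hxc hpx ?_)⟩
  have hapc : Disjoint a (p ⊔ c) :=
    hap.disjoint_sup_right_of_disjoint_sup_left (hxc.mono_left (sup_le hax hpx))
  exact le_sup_left.trans (hc.2 hapc le_sup_right)

theorem exists_isUniform_le [Lattice α] [OrderBot α] [IsModularLattice α] [WellFoundedGT α]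
    {v : α} (hv : v ≠ ⊥) : ∃ u ≤ v, u ≠ ⊥ ∧ IsUniform u := by
  by_contra! H
  obtain ⟨k, ⟨w, hwv, hw, hkw⟩, hmax⟩ := wellFounded_gt.has_min
    {k | ∃ w ≤ v, w ≠ ⊥ ∧ Disjoint k w} ⟨⊥, v, le_rfl, hv, disjoint_bot_left⟩
  obtain ⟨a, haw, b, hbw, hab, ha, hb⟩ : ∃ a ≤ w, ∃ b ≤ w, Disjoint a b ∧ a ≠ ⊥ ∧ b ≠ ⊥ := by
    simpa [IsUniform, not_or] using H w hwv hw
  refine hmax (k ⊔ a) ⟨b, hbw.trans hwv, hb, ?_⟩ (lt_of_le_of_ne le_sup_left fun h => ha ?_)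
  · exact hab.disjoint_sup_left_of_disjoint_sup_right (hkw.mono_right (sup_le haw hbw))
  · exact le_bot_iff.mp (hkw (h ▸ le_sup_right) haw)

end Lattice

section Injective

variable {R : Type*} [Ring R] {M N : Type v} [AddCommGroup M] [Module R M] [AddCommGroup N]
  [Module R N]

theorem Module.Injective.of_subsingleton [Subsingleton M] : Module.Injective R M :=
  ⟨fun _ _ _ _ _ _ _ _ _ => ⟨0, fun _ => Subsingleton.elim _ _⟩⟩

theorem Module.Injective.of_retract [Module.Injective R M] (i : N →ₗ[R] M) (p : M →ₗ[R] N)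
    (hpi : p ∘ₗ i = LinearMap.id) : Module.Injective R N := by
  refine ⟨fun X Y _ _ _ _ f hf g => ?_⟩
  obtain ⟨h, hh⟩ := Module.Injective.out f hf (i ∘ₗ g)
  exact ⟨p ∘ₗ h, fun x => by simp [hh, ← LinearMap.comp_apply p i, hpi]⟩

theorem Module.Injective.of_linearEquiv [Module.Injective R M] (e : M ≃ₗ[R] N) :
    Module.Injective R N :=
  .of_retract e.symm.toLinearMap e.toLinearMap (by ext; simp)

instance Module.Injective.prod [Module.Injective R M] [Module.Injective R N] :
    Module.Injective R (M × N) := by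
  refine ⟨fun X Y _ _ _ _ f hf g => ?_⟩
  obtain ⟨h₁, hh₁⟩ := Module.Injective.out f hf (LinearMap.fst R M N ∘ₗ g)
  obtain ⟨h₂, hh₂⟩ := Module.Injective.out f hf (LinearMap.snd R M N ∘ₗ g)
  exact ⟨h₁.prod h₂, fun x => by simp [hh₁, hh₂]⟩

namespace Submodule

theorem injective_of_isCompl [Module.Injective R M] {A B : Submodule R M} (h : IsCompl A B) :
    Module.Injective R A :=
  .of_retract A.subtype (A.projectionOnto B h) (LinearMap.ext (A.projectionOnto_apply_left h))

theorem exists_isCompl_of_injective {A : Submodule R M} [Module.Injective R A] :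
    ∃ B, IsCompl A B := by
  obtain ⟨p, hp⟩ := Module.Injective.out A.subtype A.injective_subtype LinearMap.id
  exact ⟨_, LinearMap.isCompl_of_proj hp⟩

theorem injective_sup_of_disjoint {A B : Submodule R M} (hAB : Disjoint A B)
    [Module.Injective R A] [Module.Injective R B] : Module.Injective R ↥(A ⊔ B) := by
  have hinj : Function.Injective (A.subtype.coprod B.subtype) := by
    rw [← LinearMap.ker_eq_bot, LinearMap.ker_coprod_of_disjoint_range] <;> simp [hAB]
  refine .of_linearEquiv ((LinearEquiv.ofInjective _ hinj).trans (.ofEq _ _ ?_))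
  simp [LinearMap.range_coprod]

end Submodule

end Injective

namespace Submodule

section Hull

variable {R : Type*} [Ring R] {M : Type*} [AddCommGroup M] [Module R M]

theorem isEssentialIn_map_mkQ {X C : Submodule R M} (hC : Maximal (Disjoint X) C) :
    IsEssentialIn (X.map C.mkQ) ⊤ := by
  refine ⟨le_top, fun P _ hXP => ?_⟩
  have hXQ : Disjoint X (P.comap C.mkQ) := by
    refine disjoint_def.mpr fun x hxX hxP => disjoint_def.mp hC.1 x hxX ?_
    rw [← ker_mkQ C]
    exact disjoint_def.mp hXP _ (mem_map_of_mem hxX) hxP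
  have hQC : P.comap C.mkQ ≤ C := hC.2 hXQ (by simpa using LinearMap.ker_le_comap C.mkQ (p := P))
  rw [← map_comap_eq_of_surjective C.mkQ_surjective P, eq_bot_iff]
  exact (map_mono hQC).trans (mkQ_map_self C).le

/- Extending `X ↪ M` along the embedding `X ↪ M ⧸ C` gives `g` with `g ∘ mkQ = id` on `X`.
Essentiality of the image of `X` in `M ⧸ C` makes `range g` disjoint from `C`, so `range g = X`
by maximality and `g ∘ mkQ` is a projection onto `X`. -/
theorem exists_isCompl_of_maximal_disjoint [Module.Injective R M] {X C : Submodule R M}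
    (hX : Maximal (Disjoint C) X) (hC : Maximal (Disjoint X) C) : ∃ D, IsCompl X D := by
  have hinj : Function.Injective (C.mkQ ∘ₗ X.subtype) := by
    rw [← LinearMap.ker_eq_bot, LinearMap.ker_comp, ker_mkQ]
    exact disjoint_iff_comap_eq_bot.mp hC.1
  obtain ⟨g, hg⟩ := Module.Injective.out _ hinj X.subtype
  replace hg : ∀ x ∈ X, g (C.mkQ x) = x := fun x hx => hg ⟨x, hx⟩
  have hgC : C.comap g = ⊥ := by
    refine (isEssentialIn_map_mkQ hC).2 _ le_top (disjoint_def.mpr ?_)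
    rintro _ ⟨x, hx, rfl⟩ hxC
    rw [mem_comap, hg x hx] at hxC
    simp [disjoint_def.mp hC.1 x hx hxC]
  have hgX : LinearMap.range g ≤ X := by
    refine hX.2 (disjoint_def.mpr ?_) fun x hx => ⟨_, hg x hx⟩
    rintro _ hyC ⟨q, rfl⟩
    rw [show q = 0 from (mem_bot R).mp (hgC ▸ hyC), map_zero]
  exact ⟨_, LinearMap.isCompl_of_proj (f := (g ∘ₗ C.mkQ).codRestrict X fun m => hgX ⟨_, rfl⟩)
    fun x => Subtype.ext (hg x x.2)⟩

theorem exists_isEssentialIn_isCompl [Module.Injective R M] (N : Submodule R M) :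
    ∃ X D, IsEssentialIn N X ∧ IsCompl X D := by
  obtain ⟨C, -, hC⟩ := exists_le_maximal_disjoint (disjoint_bot_right : Disjoint N ⊥)
  obtain ⟨X, hNX, hX⟩ := exists_le_maximal_disjoint hC.1.symm
  obtain ⟨D, hXD⟩ := exists_isCompl_of_maximal_disjoint hX
    (hC.mono (fun _ h => h.mono_left hNX) hX.1.symm)
  exact ⟨X, D, isEssentialIn_of_maximal_disjoint hC hNX hX.1.symm, hXD⟩

end Hull

section Uniform

variable {R : Type*} [Ring R] {M N : Type*} [AddCommGroup M] [Module R M] [AddCommGroup N]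
  [Module R N]

theorem map_eq_bot_iff_of_injective {f : N →ₗ[R] M} (hf : Function.Injective f)
    {p : Submodule R N} : p.map f = ⊥ ↔ p = ⊥ :=
  (map_injective_of_injective hf).eq_iff' (map_bot f)

theorem isUniform_map {f : N →ₗ[R] M} (hf : Function.Injective f) {U : Submodule R N}
    (hU : IsUniform U) : IsUniform (U.map f) := by
  have hmap : ∀ A ≤ U.map f, (A.comap f).map f = A := fun A hA => by
    rw [map_comap_eq, inf_eq_right]
    exact hA.trans LinearMap.map_le_range
  have hle : ∀ A ≤ U.map f, A.comap f ≤ U := fun A hA =>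
    (comap_mono hA).trans (comap_map_eq_of_injective hf U).le
  intro A hA B hB hAB
  have hdisj : Disjoint (A.comap f) (B.comap f) := disjoint_def.mpr fun x hxA hxB =>
    hf (by simpa using disjoint_def.mp hAB _ hxA hxB)
  refine (hU _ (hle A hA) _ (hle B hB) hdisj).imp (fun h => ?_) (fun h => ?_)
  · rw [← hmap A hA, h, map_bot]
  · rw [← hmap B hB, h, map_bot]

end Uniform

theorem isIndecomposableModule_of_isUniform {R : Type u} [Ring R] {M : Type u} [AddCommGroup M]
    [Module R M] {X : Submodule R M} (hX : X ≠ ⊥) (hXu : IsUniform X) :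
    IsIndecomposableModule R X := by
  refine ⟨nontrivial_iff_ne_bot.mpr hX, fun A B hAB => ?_⟩
  simpa only [map_eq_bot_iff_of_injective X.injective_subtype] using
    hXu _ (map_subtype_le X A) _ (map_subtype_le X B)
      (disjoint_map X.injective_subtype hAB.disjoint)

section Noetherian

variable {R : Type*} [Ring R] [IsNoetherianRing R] {M : Type v} [AddCommGroup M] [Module R M]

theorem baer_iSup_of_directed {ι : Type*} [Nonempty ι] {F : ι → Submodule R M}
    (hF : Directed (· ≤ ·) F)
    (hext : ∀ i (I : Ideal R) (g : I →ₗ[R] F i),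
      ∃ m ∈ ⨆ i, F i, ∀ r (hr : r ∈ I), r • m = g ⟨r, hr⟩) :
    Module.Baer R ↥(⨆ i, F i) := by
  intro I g
  have hfg : (LinearMap.range ((⨆ i, F i).subtype ∘ₗ g)).FG := by
    rw [LinearMap.range_eq_map]
    exact (IsNoetherian.noetherian ⊤).map _
  obtain ⟨_, ⟨i, rfl⟩, hi⟩ := (CompleteLattice.isCompactElement_iff_le_of_directed_sSup_le _ _).mp
    ((fg_iff_compact _).mp hfg) (Set.range F) (Set.range_nonempty F) hF.directedOn_range
    (by rw [sSup_range]; rintro _ ⟨x, rfl⟩; exact (g x).2)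
  obtain ⟨m, hm, hmg⟩ := hext i I (LinearMap.codRestrict (F i) _ fun x => hi ⟨x, rfl⟩)
  exact ⟨LinearMap.toSpanSingleton R _ ⟨m, hm⟩, fun r hr => Subtype.ext (hmg r hr)⟩

theorem injective_iSup_of_directed [Small.{v} R] {ι : Type*} [Nonempty ι]
    {F : ι → Submodule R M} (hF : Directed (· ≤ ·) F) [∀ i, Module.Injective R (F i)] :
    Module.Injective R ↥(⨆ i, F i) := by
  refine Module.Baer.injective (baer_iSup_of_directed hF fun i I g => ?_)
  obtain ⟨g', hg'⟩ := Module.Baer.of_injective (inferInstance : Module.Injective R (F i)) I g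
  refine ⟨g' 1, le_iSup F i (g' 1).2, fun r hr => ?_⟩
  rw [← hg' r hr, ← coe_smul, ← map_smul, smul_eq_mul, mul_one]

theorem exists_isUniform_le {N : Submodule R M} (hN : N ≠ ⊥) :
    ∃ U ≤ N, U ≠ ⊥ ∧ IsUniform U := by
  obtain ⟨x, hxN, hx⟩ := N.ne_bot_iff.mp hN
  have htop : (⊤ : Submodule R (R ∙ x)) ≠ ⊥ := (Submodule.ne_bot_iff _).mpr
    ⟨⟨x, mem_span_singleton_self x⟩, mem_top, by simpa using hx⟩
  obtain ⟨U, -, hU, hUu⟩ := _root_.exists_isUniform_le htop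
  exact ⟨U.map (R ∙ x).subtype,
    (map_subtype_le _ _).trans ((span_singleton_le_iff_mem _ _).mpr hxN),
    (map_eq_bot_iff_of_injective (R ∙ x).injective_subtype).not.mpr hU,
    isUniform_map (R ∙ x).injective_subtype hUu⟩

theorem exists_injective_isUniform_disjoint [Module.Injective R M] {N D : Submodule R M}
    (hD : D ≠ ⊥) (hND : Disjoint N D) :
    ∃ X : Submodule R M, Module.Injective R X ∧ X ≠ ⊥ ∧ IsUniform X ∧ Disjoint N X := by
  obtain ⟨U, hUD, hU, hUu⟩ := D.exists_isUniform_le hD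
  obtain ⟨X, C, hUX, hXC⟩ := U.exists_isEssentialIn_isCompl
  refine ⟨X, injective_of_isCompl hXC, fun h => hU (le_bot_iff.mp (h ▸ hUX.1)),
    hUX.isUniform hUu, disjoint_iff.mpr ?_⟩
  exact hUX.2 _ inf_le_right ((hND.mono_right hUD).symm.mono_right inf_le_left)

theorem exists_sSupIndep_injective_isUniform [Small.{v} R] [Module.Injective R M] :
    ∃ S : Set (Submodule R M), sSupIndep S ∧ sSup S = ⊤ ∧
      ∀ A ∈ S, Module.Injective R A ∧ A ≠ ⊥ ∧ IsUniform A := by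
  -- Injectivity of `sSup S` is kept in the family: for a chain it is a directed supremum.
  let 𝒮 : Set (Set (Submodule R M)) := {S | sSupIndep S ∧ Module.Injective R ↥(sSup S) ∧
    ∀ A ∈ S, Module.Injective R A ∧ A ≠ ⊥ ∧ IsUniform A}
  have hchains : ∀ c ⊆ 𝒮, IsChain (· ⊆ ·) c → c.Nonempty → ∃ ub ∈ 𝒮, ∀ S ∈ c, S ⊆ ub := by
    intro c hc hchain hne
    refine ⟨⋃₀ c, ⟨iSupIndep_sUnion_of_directed hchain.directedOn fun S hS => (hc hS).1, ?_,
      fun A ⟨S, hSc, hAS⟩ => (hc hSc).2.2 A hAS⟩, fun S => Set.subset_sUnion_of_mem⟩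
    have := hne.to_subtype
    have (S : c) : Module.Injective R ↥(sSup S.1) := (hc S.2).2.1
    rw [sSup_sUnion, ← iSup_subtype'']
    exact injective_iSup_of_directed
      (hchain.directedOn.directed_val.mono_comp _ fun _ _ h => sSup_le_sSup h)
  obtain ⟨S, -, ⟨hSind, hSinj, hS⟩, hSmax⟩ := zorn_subset_nonempty 𝒮 hchains ∅
    ⟨sSupIndep_empty, by rw [sSup_empty]; exact .of_subsingleton, by simp⟩
  refine ⟨S, hSind, ?_, hS⟩
  obtain ⟨D, hD⟩ := (sSup S).exists_isCompl_of_injective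
  by_contra hne
  have hD0 : D ≠ ⊥ := fun h => hne (eq_top_of_isCompl_bot (h ▸ hD))
  obtain ⟨X, hXinj, hX0, hXu, hSX⟩ := exists_injective_isUniform_disjoint hD0 hD.disjoint
  have hXS : X ∉ S := fun h => hX0 (le_bot_iff.mp (hSX (le_sSup h) le_rfl))
  have hins : insert X S ∈ 𝒮 := by
    refine ⟨hSind.insert_of_disjoint hSX.symm, ?_, ?_⟩
    · rw [sSup_insert]
      exact injective_sup_of_disjoint hSX.symm
    · rintro A (rfl | hA)
      exacts [⟨hXinj, hX0, hXu⟩, hS A hA]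
  exact hXS (hSmax hins (Set.subset_insert X S) (Set.mem_insert X S))

end Noetherian

end Submodule

section Indecomposable

variable {R : Type u} [Ring R] {M : Type u} [AddCommGroup M] [Module R M]

theorem isUniform_top_of_isIndecomposableModule [Module.Injective R M]
    (hM : IsIndecomposableModule R M) : IsUniform (⊤ : Submodule R M) := by
  intro A _ B _ hAB
  obtain ⟨X, D, hAX, hXD⟩ := A.exists_isEssentialIn_isCompl
  refine (hM.2 X D hXD).imp (fun (hX : X = ⊥) => le_bot_iff.mp (hX ▸ hAX.1)) fun hD => ?_
  have hX : X = ⊤ := eq_top_of_isCompl_bot (hD ▸ hXD)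
  exact hAX.2 B (hX ▸ le_top) hAB

theorem isEssentialSubmodule_of_isUniform_top (h : IsUniform (⊤ : Submodule R M))
    {N : Submodule R M} (hN : N ≠ ⊥) : IsEssentialSubmodule N :=
  fun P hP hNP => hP ((h N le_top P le_top (disjoint_iff.mpr hNP)).resolve_left hN)

end Indecomposable

section Cardinality

open Cardinal

variable {R : Type u} [Ring R] {M : Type u} [AddCommGroup M] [Module R M] {κ : Cardinal.{u}}

theorem Cardinal.mk_finset_le_of_le {α : Type u} (hκ : ℵ₀ ≤ κ) (hα : #α ≤ κ) :
    #(Finset α) ≤ κ := by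
  classical
  calc #(Finset α) ≤ #(List α) := mk_le_of_surjective List.toFinset_surjective
    _ ≤ max ℵ₀ #α := mk_list_le_max α
    _ ≤ κ := max_le hκ hα

theorem Cardinal.mk_finsupp_le_of_le {α β : Type u} [Zero β] (hκ : ℵ₀ ≤ κ) (hα : #α ≤ κ)
    (hβ : #β ≤ κ) : #(α →₀ β) ≤ κ := by
  refine (mk_le_of_injective (Finsupp.graph_injective α β)).trans (mk_finset_le_of_le hκ ?_)
  rw [mk_prod, lift_id, lift_id]
  exact (mul_le_mul' hα hβ).trans (mul_eq_self hκ).le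

theorem Submodule.mk_span_le (hκ : ℵ₀ ≤ κ) (hR : #R ≤ κ) {s : Set M} (hs : #s ≤ κ) :
    #(span R s) ≤ κ := by
  rw [← Subtype.range_coe (s := s), ← Finsupp.range_linearCombination]
  exact mk_range_le.trans (mk_finsupp_le_of_le hκ hs hR)

theorem Ideal.mk_le_of_isNoetherianRing [IsNoetherianRing R] (hκ : ℵ₀ ≤ κ) (hR : #R ≤ κ) :
    #(Ideal R) ≤ κ :=
  (mk_le_of_surjective (f := fun t : Finset R => Submodule.span R (t : Set R))
    fun I => IsNoetherian.noetherian I).trans (mk_finset_le_of_le hκ hR)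

theorem LinearMap.mk_le_of_finite {N W : Type u} [AddCommGroup N] [Module R N]
    [Module.Finite R N] [AddCommGroup W] [Module R W] (hκ : ℵ₀ ≤ κ) (hW : #W ≤ κ) :
    #(N →ₗ[R] W) ≤ κ := by
  obtain ⟨n, s, hs⟩ := Module.Finite.exists_fin (R := R) (M := N)
  calc #(N →ₗ[R] W) ≤ #(Fin n → W) :=
        mk_le_of_injective (f := fun φ => φ ∘ s) fun φ ψ h => ext_on_range hs (congrFun h)
    _ = #W ^ n := by simp
    _ ≤ κ := (power_le_power_right hW).trans (pow_le hκ (natCast_lt_aleph0 (n := n)))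

end Cardinality

section BaerClosure

open Cardinal

variable {R : Type u} [Ring R] {M : Type u} [AddCommGroup M] [Module R M]

/- `Classical.epsilon` returns a solution of the extension problem for `g` whenever there is one,
which is always the case when `M` is injective. -/
noncomputable def baerSolution {I : Ideal R} (g : I →ₗ[R] M) : M :=
  Classical.epsilon fun m => ∀ r (hr : r ∈ I), r • m = g ⟨r, hr⟩

theorem smul_baerSolution [Module.Injective R M] {I : Ideal R} (g : I →ₗ[R] M) {r : R}
    (hr : r ∈ I) : r • baerSolution g = g ⟨r, hr⟩ := by
  refine Classical.epsilon_spec (p := fun m => ∀ r (hr : r ∈ I), r • m = g ⟨r, hr⟩) ?_ r hr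
  obtain ⟨g', hg'⟩ := Module.Baer.of_injective ‹_› I g
  exact ⟨g' 1, fun r hr => by rw [← hg' r hr, ← map_smul, smul_eq_mul, mul_one]⟩

noncomputable def baerStep (W : Submodule R M) : Submodule R M :=
  Submodule.span R
    (W ∪ Set.range fun p : Σ I : Ideal R, I →ₗ[R] W => baerSolution (W.subtype ∘ₗ p.2))

noncomputable def baerClosure (N : Submodule R M) : Submodule R M :=
  ⨆ n, baerStep^[n] N

theorem le_baerStep (W : Submodule R M) : W ≤ baerStep W :=
  fun _ hx => Submodule.subset_span (Or.inl hx)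

theorem monotone_iterate_baerStep (N : Submodule R M) : Monotone fun n => baerStep^[n] N :=
  monotone_nat_of_le_succ fun n => by
    rw [Function.iterate_succ_apply']
    exact le_baerStep _

theorem le_baerClosure (N : Submodule R M) : N ≤ baerClosure N :=
  le_iSup (fun n => baerStep^[n] N) 0

variable [IsNoetherianRing R]

theorem injective_baerClosure [Module.Injective R M] (N : Submodule R M) :
    Module.Injective R (baerClosure N) := by
  refine Module.Baer.injective (Submodule.baer_iSup_of_directed
    (monotone_iterate_baerStep N).directed_le fun n I g =>
      ⟨baerSolution ((baerStep^[n] N).subtype ∘ₗ g), ?_, fun r hr => smul_baerSolution _ hr⟩)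
  refine le_iSup (fun n => baerStep^[n] N) (n + 1) ?_
  rw [Function.iterate_succ_apply']
  exact Submodule.subset_span (Or.inr ⟨⟨I, g⟩, rfl⟩)

variable {κ : Cardinal.{u}}

theorem mk_baerStep_le (hκ : ℵ₀ ≤ κ) (hR : #R ≤ κ) {W : Submodule R M} (hW : #W ≤ κ) :
    #(baerStep W) ≤ κ := by
  refine Submodule.mk_span_le hκ hR ((mk_union_le _ _).trans ?_)
  refine (add_le_add hW (mk_range_le.trans ?_)).trans (add_eq_self hκ).le
  rw [mk_sigma]
  refine (sum_le_sum _ _ fun I => LinearMap.mk_le_of_finite hκ hW).trans ?_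
  rw [sum_const']
  exact (mul_le_mul' (Ideal.mk_le_of_isNoetherianRing hκ hR) le_rfl).trans (mul_eq_self hκ).le

theorem mk_baerClosure_le (hκ : ℵ₀ ≤ κ) (hR : #R ≤ κ) {N : Submodule R M} (hN : #N ≤ κ) :
    #(baerClosure N) ≤ κ := by
  have hstep : ∀ n, #(baerStep^[n] N) ≤ κ := fun n => by
    induction n with
    | zero => exact hN
    | succ n ih => rw [Function.iterate_succ_apply']; exact mk_baerStep_le hκ hR ih
  have hunion := mk_iUnion_le_sum_mk_lift (f := fun n => (baerStep^[n] N : Set M))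
  rw [← Submodule.coe_iSup_of_directed _ (monotone_iterate_baerStep N).directed_le,
    lift_uzero] at hunion
  calc #(baerClosure N) ≤ sum fun n => #(baerStep^[n] N) := hunion
    _ ≤ sum fun _ : ℕ => κ := sum_le_sum _ _ hstep
    _ = κ := by simp [aleph0_mul_eq hκ]

end BaerClosure

section Matlis

open Cardinal

variable {R : Type u} [Ring R] {M : Type u} [AddCommGroup M] [Module R M]

theorem mk_le_of_isIndecomposableModule [IsNoetherianRing R] [Module.Injective R M]
    (hM : IsIndecomposableModule R M) : #M ≤ #R + ℵ₀ := by
  have hκ : ℵ₀ ≤ #R + ℵ₀ := le_add_self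
  have hR : #R ≤ #R + ℵ₀ := le_self_add
  have := hM.1
  obtain ⟨x, hx⟩ := exists_ne (0 : M)
  have := injective_baerClosure (R ∙ x)
  obtain ⟨D, hXD⟩ := (baerClosure (R ∙ x)).exists_isCompl_of_injective
  have hX : baerClosure (R ∙ x) = ⊤ := by
    refine (hM.2 _ D hXD).elim (fun h => absurd ?_ hx) (fun h => eq_top_of_isCompl_bot (h ▸ hXD))
    simpa [h] using le_baerClosure (R ∙ x) (Submodule.mem_span_singleton_self x)
  calc #M = #(baerClosure (R ∙ x)) := by rw [hX]; exact (mk_congr Submodule.topEquiv.toEquiv).symm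
    _ ≤ #R + ℵ₀ := mk_baerClosure_le hκ hR (Submodule.mk_span_le hκ hR
      (by simpa using one_le_aleph0.trans hκ))

theorem exists_linearEquiv_quotient_finsupp_of_mk_le {T : Type u} (h : #M ≤ #T) :
    ∃ K : Submodule R (T →₀ R), Nonempty (((T →₀ R) ⧸ K) ≃ₗ[R] M) := by
  obtain ⟨e⟩ := (Cardinal.le_def M T).mp h
  have hsurj : Function.Surjective (Finsupp.linearCombination R (Function.invFun e)) := by
    rw [← LinearMap.range_eq_top, Finsupp.range_linearCombination,
      (Function.invFun_surjective e.injective).range_eq, Submodule.span_univ]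
  exact ⟨_, ⟨LinearMap.quotKerEquivOfSurjective _ hsurj⟩⟩

end Matlis

/-- **Matlis' theorems.**  Let `R` be a left Noetherian ring.  Then:
(1) every injective left `R`-module is a direct sum of indecomposable injective submodules;
(2) every indecomposable injective left `R`-module contains an essential copy of a cyclic
module `R ⧸ I` for some left ideal `I ⊆ R`;
(3) every indecomposable injective left `R`-module has cardinality at most `|R| + ℵ₀`, and
consequently there is, up to isomorphism, only a set of indecomposable injective left
`R`-modules. -/
theorem matlis_structure_of_injectives
    (R : Type u) [Ring R] [IsNoetherianRing R] :
    (∀ (M : Type u) [AddCommGroup M] [Module R M], Module.Injective R M →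
      ∃ (ι : Type u) (_ : DecidableEq ι) (A : ι → Submodule R M),
        (∀ i, Module.Injective R (A i)) ∧
        (∀ i, IsIndecomposableModule R (A i)) ∧
        DirectSum.IsInternal A) ∧
    (∀ (M : Type u) [AddCommGroup M] [Module R M], Module.Injective R M →
      IsIndecomposableModule R M →
      ∃ (I : Ideal R) (f : (R ⧸ I) →ₗ[R] M),
        Function.Injective f ∧ IsEssentialSubmodule (LinearMap.range f)) ∧
    (∀ (M : Type u) [AddCommGroup M] [Module R M], Module.Injective R M →
      IsIndecomposableModule R M →
      Cardinal.mk M ≤ Cardinal.mk R + Cardinal.aleph0) ∧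
    (∃ (ι : Type u) (V : ι → ModuleCat.{u} R),
      ∀ (M : ModuleCat.{u} R), Module.Injective R M → IsIndecomposableModule R M →
        ∃ i : ι, Nonempty (M ≅ V i)) := by
  classical
  refine ⟨fun M _ _ _ => ?_, fun M _ _ _ hM => ?_, fun M _ _ _ hM => ?_, ?_⟩
  · obtain ⟨S, hSind, hStop, hS⟩ := Submodule.exists_sSupIndep_injective_isUniform (R := R)
      (M := M)
    refine ⟨S, inferInstance, (↑), fun A => (hS A A.2).1,
      fun A => Submodule.isIndecomposableModule_of_isUniform (hS A A.2).2.1 (hS A A.2).2.2, ?_⟩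
    exact DirectSum.isInternal_submodule_of_iSupIndep_of_iSup_eq_top
      ((sSupIndep_iff S).mp hSind) (by rwa [← sSup_eq_iSup'])
  · have := hM.1
    obtain ⟨x, hx⟩ := exists_ne (0 : M)
    refine ⟨_, (R ∙ x).subtype ∘ₗ (Ideal.quotTorsionOfEquivSpanSingleton R M x).toLinearMap,
      (R ∙ x).injective_subtype.comp (LinearEquiv.injective _), ?_⟩
    rw [LinearMap.range_comp, LinearEquiv.range, Submodule.map_top, Submodule.range_subtype]
    exact isEssentialSubmodule_of_isUniform_top (isUniform_top_of_isIndecomposableModule hM)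
      (by simpa using hx)
  · exact mk_le_of_isIndecomposableModule hM
  · refine ⟨Submodule R ((R ⊕ ULift.{u} ℕ) →₀ R), fun K => ModuleCat.of R (_ ⧸ K),
      fun M _ hM => ?_⟩
    obtain ⟨K, ⟨e⟩⟩ := exists_linearEquiv_quotient_finsupp_of_mk_le (R := R)
      (T := R ⊕ ULift.{u} ℕ)
      ((mk_le_of_isIndecomposableModule hM).trans_eq (by simp [Cardinal.mk_sum]))
    exact ⟨K, ⟨e.toModuleIso.symm⟩⟩
end
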